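/- arXiv:2309.11397 — 8 statements merged into one kernel-verified Lean document; each statement's English description precedes it below -/
import Mathlib

section
/- The relabeling group Γ₆, i.e. the subgroup of permutations of the 12-element label set L generated by c, s_r, s_g, s_b and Cr, has order 48. Moreover Cr is central in Γ₆, the subgroup H = ⟨c, s_r, s_g, s_b⟩ has order 24, Cr ∉ H, and Γ₆ is the internal direct product H × ⟨Cr⟩; in particular Γ₆ ≅ (C₃ ⋉ S₂³) × S₂. -/
set_option maxRecDepth 10000

/- The 12-element label set `L = {R₀,R₁,R₂,R₃,G₀,G₁,G₂,G₃,B₀,B₁,B₂,B₃}` is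
modeled by `Fin 12` with `Rᵢ = i`, `Gᵢ = 4 + i`, `Bᵢ = 8 + i`. -/

/-- `c = (R₀G₀B₀)(R₁G₁B₁)(R₂G₂B₂)(R₃G₃B₃)`. -/
def cL : Equiv.Perm (Fin 12) where
  toFun k := k + 4
  invFun k := k + 8
  left_inv := by decide
  right_inv := by decide

/-- `s_r = (R₁R₂)`. -/
def srL : Equiv.Perm (Fin 12) := Equiv.swap 1 2
/-- `s_g = (G₁G₂)`. -/
def sgL : Equiv.Perm (Fin 12) := Equiv.swap 5 6
/-- `s_b = (B₁B₂)`. -/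
def sbL : Equiv.Perm (Fin 12) := Equiv.swap 9 10
/-- `Cr = (R₀R₃)(G₀G₃)(B₀B₃)`. -/
def crL : Equiv.Perm (Fin 12) :=
  Equiv.swap 0 3 * Equiv.swap 4 7 * Equiv.swap 8 11

/-- The relabeling group `Γ₆ = ⟨c, s_r, s_g, s_b, Cr⟩ ⊆ Sym(L)`. -/
def Γ6 : Subgroup (Equiv.Perm (Fin 12)) :=
  Subgroup.closure {cL, srL, sgL, sbL, crL}

/-- The subgroup `H = ⟨c, s_r, s_g, s_b⟩`. -/
def H6 : Subgroup (Equiv.Perm (Fin 12)) :=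
  Subgroup.closure {cL, srL, sgL, sbL}

/-! ### Table representation of permutations -/

def tbl (g : Equiv.Perm (Fin 12)) : List ℕ := (List.finRange 12).map fun i => (g i : ℕ)

def comp (f g : List ℕ) : List ℕ := g.map fun j => f.getD j 0

lemma tbl_getD (g : Equiv.Perm (Fin 12)) (k : Fin 12) : (tbl g).getD (k : ℕ) 0 = (g k : ℕ) := by
  have hk : (k : ℕ) < (tbl g).length := by simp [tbl]
  rw [List.getD_eq_getElem _ _ hk]
  simp [tbl]

lemma tbl_mul (g h : Equiv.Perm (Fin 12)) : tbl (g * h) = comp (tbl g) (tbl h) := by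
  simp only [comp, tbl, List.map_map]
  apply List.map_congr_left
  intro i _
  simp only [Function.comp]
  have := tbl_getD g (h i)
  simp only [tbl] at this
  rw [this]
  rfl

lemma tbl_inj : Function.Injective tbl := by
  intro g h e
  ext i
  have h1 := tbl_getD g i
  have h2 := tbl_getD h i
  rw [e, h2] at h1
  exact_mod_cast h1.symm

def T24 : List (List Nat) := [
  [0, 1, 2, 3, 4, 5, 6, 7, 8, 9, 10, 11],
  [0, 1, 2, 3, 4, 5, 6, 7, 8, 10, 9, 11],
  [0, 1, 2, 3, 4, 6, 5, 7, 8, 9, 10, 11],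
  [0, 1, 2, 3, 4, 6, 5, 7, 8, 10, 9, 11],
  [0, 2, 1, 3, 4, 5, 6, 7, 8, 9, 10, 11],
  [0, 2, 1, 3, 4, 5, 6, 7, 8, 10, 9, 11],
  [0, 2, 1, 3, 4, 6, 5, 7, 8, 9, 10, 11],
  [0, 2, 1, 3, 4, 6, 5, 7, 8, 10, 9, 11],
  [4, 5, 6, 7, 8, 9, 10, 11, 0, 1, 2, 3],
  [4, 5, 6, 7, 8, 9, 10, 11, 0, 2, 1, 3],
  [4, 5, 6, 7, 8, 10, 9, 11, 0, 1, 2, 3],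
  [4, 5, 6, 7, 8, 10, 9, 11, 0, 2, 1, 3],
  [4, 6, 5, 7, 8, 9, 10, 11, 0, 1, 2, 3],
  [4, 6, 5, 7, 8, 9, 10, 11, 0, 2, 1, 3],
  [4, 6, 5, 7, 8, 10, 9, 11, 0, 1, 2, 3],
  [4, 6, 5, 7, 8, 10, 9, 11, 0, 2, 1, 3],
  [8, 9, 10, 11, 0, 1, 2, 3, 4, 5, 6, 7],
  [8, 9, 10, 11, 0, 1, 2, 3, 4, 6, 5, 7],
  [8, 9, 10, 11, 0, 2, 1, 3, 4, 5, 6, 7],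
  [8, 9, 10, 11, 0, 2, 1, 3, 4, 6, 5, 7],
  [8, 10, 9, 11, 0, 1, 2, 3, 4, 5, 6, 7],
  [8, 10, 9, 11, 0, 1, 2, 3, 4, 6, 5, 7],
  [8, 10, 9, 11, 0, 2, 1, 3, 4, 5, 6, 7],
  [8, 10, 9, 11, 0, 2, 1, 3, 4, 6, 5, 7]]

def idxL : List (ℕ × ℕ × ℕ × ℕ) :=
  (List.range 3).flatMap fun i => (List.range 2).flatMap fun a =>
  (List.range 2).flatMap fun b => (List.range 2).map fun d => (i,a,b,d)

def wd (p : ℕ × ℕ × ℕ × ℕ) : Equiv.Perm (Fin 12) :=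
  cL ^ p.1 * srL ^ p.2.1 * sgL ^ p.2.2.1 * sbL ^ p.2.2.2

def LW : List (Equiv.Perm (Fin 12)) := idxL.map wd

lemma T24_eq : T24 = LW.map tbl := by decide
lemma T24_mul : ∀ x ∈ T24, ∀ y ∈ T24, comp x y ∈ T24 := by decide
lemma T24_card : T24.toFinset.card = 24 := by decide
lemma tbl_one : tbl 1 ∈ T24 := by decide
lemma tbl_cr_not : tbl crL ∉ T24 := by decide
lemma tbl_gens : tbl cL ∈ T24 ∧ tbl srL ∈ T24 ∧ tbl sgL ∈ T24 ∧ tbl sbL ∈ T24 := by decide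
lemma hcr2 : crL ^ 2 = 1 := by decide
lemma hcr_ne : crL ≠ 1 := by decide
lemma comm_gens : crL * cL = cL * crL ∧ crL * srL = srL * crL ∧ crL * sgL = sgL * crL ∧
    crL * sbL = sbL * crL := by decide

/-! ### The subgroup `K24` -/

def K24 : Subgroup (Equiv.Perm (Fin 12)) where
  carrier := {g | tbl g ∈ T24}
  one_mem' := tbl_one
  mul_mem' := fun {a b} ha hb => by
    show tbl (a * b) ∈ T24
    rw [tbl_mul]; exact T24_mul _ ha _ hb
  inv_mem' := fun {a} ha => by
    have hpow : ∀ n, tbl (a ^ n) ∈ T24 := by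
      intro n
      induction n with
      | zero => simpa using tbl_one
      | succ n ih => rw [pow_succ, tbl_mul]; exact T24_mul _ ih _ ha
    have h0 : 0 < orderOf a := orderOf_pos a
    have h1 : a * a ^ (orderOf a - 1) = 1 := by
      rw [← pow_succ', Nat.sub_add_cancel h0, pow_orderOf_eq_one]
    have h2 : a⁻¹ = a ^ (orderOf a - 1) := inv_eq_of_mul_eq_one_right h1
    show tbl a⁻¹ ∈ T24
    rw [h2]; exact hpow _

lemma mem_K24 {g : Equiv.Perm (Fin 12)} : g ∈ K24 ↔ tbl g ∈ T24 := Iff.rfl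

lemma H6_le_K24 : H6 ≤ K24 := by
  rw [H6, Subgroup.closure_le]
  rintro x hx
  simp only [Set.mem_insert_iff, Set.mem_singleton_iff] at hx
  rcases hx with rfl | rfl | rfl | rfl
  · exact tbl_gens.1
  · exact tbl_gens.2.1
  · exact tbl_gens.2.2.1
  · exact tbl_gens.2.2.2

lemma wd_mem (p : ℕ × ℕ × ℕ × ℕ) : wd p ∈ H6 := by
  refine mul_mem (mul_mem (mul_mem (pow_mem ?_ _) (pow_mem ?_ _)) (pow_mem ?_ _)) (pow_mem ?_ _) <;>
    apply Subgroup.subset_closure <;> simp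

lemma K24_le_H6 : K24 ≤ H6 := by
  intro g hg
  have hmem : tbl g ∈ LW.map tbl := by rw [← T24_eq]; exact hg
  obtain ⟨w, hw, hwg⟩ := List.mem_map.1 hmem
  obtain ⟨p, _, rfl⟩ := List.mem_map.1 hw
  exact tbl_inj hwg ▸ wd_mem p

lemma H6_eq : H6 = K24 := le_antisymm H6_le_K24 K24_le_H6

lemma crL_not_mem_H6 : crL ∉ H6 := by
  rw [H6_eq]
  exact tbl_cr_not

lemma card_H6 : Nat.card H6 = 24 := by
  rw [H6_eq]
  have hbij : Function.Bijective
      (fun g : K24 => (⟨tbl g.1, List.mem_toFinset.2 g.2⟩ : {t // t ∈ T24.toFinset})) := by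
    constructor
    · intro a b h
      exact Subtype.ext (tbl_inj (congrArg Subtype.val h))
    · rintro ⟨t, ht⟩
      have ht' : t ∈ LW.map tbl := by rw [← T24_eq]; exact List.mem_toFinset.1 ht
      obtain ⟨w, _, hwt⟩ := List.mem_map.1 ht'
      have hwK : w ∈ K24 := by rw [mem_K24, hwt]; exact List.mem_toFinset.1 ht
      exact ⟨⟨w, hwK⟩, Subtype.ext hwt⟩
  rw [Nat.card_eq_of_bijective _ hbij, Nat.card_eq_finsetCard]
  exact T24_card

lemma H6_le_Γ6 : H6 ≤ Γ6 := Subgroup.closure_mono (by intro x hx; simp only [Set.mem_insert_iff, Set.mem_singleton_iff] at hx ⊢; tauto)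

lemma crL_mem_Γ6 : crL ∈ Γ6 := Subgroup.subset_closure (by simp)

lemma crL_comm_Γ6 : ∀ g ∈ Γ6, crL * g = g * crL := by
  have hle : Γ6 ≤ Subgroup.centralizer {crL} := by
    rw [Γ6, Subgroup.closure_le]
    rintro x hx
    simp only [Set.mem_insert_iff, Set.mem_singleton_iff] at hx
    rw [SetLike.mem_coe, Subgroup.mem_centralizer_iff]
    rintro h rfl
    rcases hx with rfl | rfl | rfl | rfl | rfl
    · exact comm_gens.1
    · exact comm_gens.2.1
    · exact comm_gens.2.2.1
    · exact comm_gens.2.2.2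
    · rfl
  intro g hg
  exact (Subgroup.mem_centralizer_iff.1 (hle hg)) crL rfl

lemma crL_comm_H6 {h : Equiv.Perm (Fin 12)} (hh : h ∈ H6) : Commute crL h :=
  crL_comm_Γ6 h (H6_le_Γ6 hh)

lemma crpow_mod (n : ℕ) : crL ^ (n % 2) = crL ^ n := by
  conv_rhs => rw [← Nat.div_add_mod n 2]
  rw [pow_add, pow_mul, hcr2, one_pow, one_mul]

/-! ### The direct product homomorphism -/

def Φ : ↥H6 × Multiplicative (ZMod 2) →* Equiv.Perm (Fin 12) where
  toFun x := (x.1 : Equiv.Perm (Fin 12)) * crL ^ (Multiplicative.toAdd x.2).val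
  map_one' := by simp
  map_mul' x y := by
    have hc : Commute (crL ^ (Multiplicative.toAdd x.2).val) (y.1 : Equiv.Perm (Fin 12)) :=
      (crL_comm_H6 y.1.2).pow_left _
    show ((x.1 * y.1 : ↥H6) : Equiv.Perm (Fin 12)) * crL ^ (Multiplicative.toAdd (x.2 * y.2)).val
        = _
    rw [Subgroup.coe_mul, toAdd_mul, ZMod.val_add, crpow_mod, pow_add]
    simp only [mul_assoc]
    congr 1
    rw [← mul_assoc, ← hc.eq, mul_assoc]

lemma Φ_mem (x : ↥H6 × Multiplicative (ZMod 2)) : Φ x ∈ Γ6 :=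
  mul_mem (H6_le_Γ6 x.1.2) (pow_mem crL_mem_Γ6 _)

def Φ' : ↥H6 × Multiplicative (ZMod 2) →* Γ6 := Φ.codRestrict Γ6 Φ_mem

lemma zmod2_cases : ∀ z : ZMod 2, z = 0 ∨ z = 1 := by decide

lemma Φ'_bij : Function.Bijective Φ' := by
  constructor
  · rintro ⟨x1, t⟩ ⟨y1, s⟩ h
    have h' : (x1 : Equiv.Perm (Fin 12)) * crL ^ (Multiplicative.toAdd t).val
        = (y1 : Equiv.Perm (Fin 12)) * crL ^ (Multiplicative.toAdd s).val :=
      congrArg Subtype.val h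
    have hts : Multiplicative.toAdd t = Multiplicative.toAdd s → (⟨x1, t⟩ :
        ↥H6 × Multiplicative (ZMod 2)) = ⟨y1, s⟩ := by
      intro he
      rw [he] at h'
      have hx : x1 = y1 := Subtype.ext (mul_right_cancel h')
      have ht : t = s := he
      rw [hx, ht]
    rcases zmod2_cases (Multiplicative.toAdd t) with h1 | h1 <;>
      rcases zmod2_cases (Multiplicative.toAdd s) with h2 | h2
    · exact hts (h1.trans h2.symm)
    · exfalso
      rw [h1, h2] at h'
      simp only [ZMod.val_zero, ZMod.val_one, pow_zero, pow_one, mul_one] at h'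
      have hm : (y1 : Equiv.Perm (Fin 12))⁻¹ * (x1 : Equiv.Perm (Fin 12)) ∈ H6 :=
        mul_mem (inv_mem y1.2) x1.2
      rw [h', inv_mul_cancel_left] at hm
      exact crL_not_mem_H6 hm
    · exfalso
      rw [h1, h2] at h'
      simp only [ZMod.val_zero, ZMod.val_one, pow_zero, pow_one, mul_one] at h'
      have hm : (x1 : Equiv.Perm (Fin 12))⁻¹ * (y1 : Equiv.Perm (Fin 12)) ∈ H6 :=
        mul_mem (inv_mem x1.2) y1.2
      rw [← h', inv_mul_cancel_left] at hm
      exact crL_not_mem_H6 hm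
    · exact hts (h1.trans h2.symm)
  · rintro ⟨g, hg⟩
    have hrange : Γ6 ≤ Φ.range := by
      rw [Γ6, Subgroup.closure_le]
      rintro x hx
      simp only [Set.mem_insert_iff, Set.mem_singleton_iff] at hx
      rcases hx with rfl | rfl | rfl | rfl | rfl
      · exact ⟨(⟨⟨cL, Subgroup.subset_closure (by simp)⟩, 1⟩), by simp [Φ]⟩
      · exact ⟨(⟨⟨srL, Subgroup.subset_closure (by simp)⟩, 1⟩), by simp [Φ]⟩
      · exact ⟨(⟨⟨sgL, Subgroup.subset_closure (by simp)⟩, 1⟩), by simp [Φ]⟩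
      · exact ⟨(⟨⟨sbL, Subgroup.subset_closure (by simp)⟩, 1⟩), by simp [Φ]⟩
      · refine ⟨(⟨1, Multiplicative.ofAdd 1⟩), ?_⟩
        show (1 : Equiv.Perm (Fin 12)) * crL ^ (Multiplicative.toAdd (Multiplicative.ofAdd (1 : ZMod 2))).val = crL
        simp [ZMod.val_one]
    obtain ⟨x, hx⟩ := hrange hg
    exact ⟨x, Subtype.ext hx⟩

/-- `Γ₆` has order 48, `Cr` is central in `Γ₆`, `H = ⟨c, s_r, s_g, s_b⟩` has order
24, `Cr ∉ H`, and `Γ₆` is the internal direct product `H × ⟨Cr⟩`; in particular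
`Γ₆ ≅ (C₃ ⋉ S₂³) × S₂ ≅ H × C₂`. -/
theorem Gamma6_order_and_direct_product :
    Nat.card Γ6 = 48 ∧
    (∀ g ∈ Γ6, crL * g = g * crL) ∧
    Nat.card H6 = 24 ∧
    crL ∉ H6 ∧
    Γ6 = H6 ⊔ Subgroup.zpowers crL ∧
    H6 ⊓ Subgroup.zpowers crL = ⊥ ∧
    Nonempty (Γ6 ≃* H6 × Multiplicative (ZMod 2)) := by
  have e : Γ6 ≃* ↥H6 × Multiplicative (ZMod 2) := (MulEquiv.ofBijective Φ' Φ'_bij).symm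
  refine ⟨?_, crL_comm_Γ6, card_H6, crL_not_mem_H6, ?_, ?_, ⟨e⟩⟩
  · rw [Nat.card_congr e.toEquiv, Nat.card_prod, card_H6]
    rw [Nat.card_eq_fintype_card]
    rfl
  · apply le_antisymm
    · rw [Γ6, Subgroup.closure_le]
      rintro x hx
      simp only [Set.mem_insert_iff, Set.mem_singleton_iff] at hx
      rw [SetLike.mem_coe]
      rcases hx with rfl | rfl | rfl | rfl | rfl
      · exact Subgroup.mem_sup_left (Subgroup.subset_closure (by simp))
      · exact Subgroup.mem_sup_left (Subgroup.subset_closure (by simp))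
      · exact Subgroup.mem_sup_left (Subgroup.subset_closure (by simp))
      · exact Subgroup.mem_sup_left (Subgroup.subset_closure (by simp))
      · exact Subgroup.mem_sup_right (Subgroup.mem_zpowers crL)
    · exact sup_le H6_le_Γ6 (Subgroup.zpowers_le.2 crL_mem_Γ6)
  · have hord : orderOf crL = 2 := by
      haveI : Fact (Nat.Prime 2) := ⟨Nat.prime_two⟩
      exact orderOf_eq_prime hcr2 hcr_ne
    rw [eq_bot_iff]
    intro x hx
    obtain ⟨hxH, hxz⟩ := Subgroup.mem_inf.1 hx
    obtain ⟨k, hk⟩ := Subgroup.mem_zpowers_iff.1 hxz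
    have hmod : crL ^ (k % 2) = x := by
      have h2 := zpow_mod_orderOf crL k
      rw [hord] at h2
      rw [← hk, ← h2]
      norm_num
    rcases Int.emod_two_eq_zero_or_one k with h | h <;> rw [h] at hmod
    · rw [Subgroup.mem_bot, ← hmod, zpow_zero]
    · exfalso
      rw [zpow_one] at hmod
      exact crL_not_mem_H6 (hmod ▸ hxH)
end

section
/- Under the linear Γ₆-action on ℤ^4, the orbits O_A, O_B, O_C, O_D of the vectors A = (2,0,0,0), B = (1,1,0,0), C = (1,1,1,1), D = (0,1,0,1) have cardinalities 2, 12, 16, 12 respectively, are pairwise disjoint, and their union R (the set of integral generators of the rays of the fan F₆ of the toric moduli space M̄₆^tor) has exactly 42 elements. -/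
/- The linear action of `Γ₆` on `ℤ^4`, with coordinates `(δ,ρ̄,γ̄,β̄)`. -/

/-- `c·(δ,ρ̄,γ̄,β̄) = (δ,β̄,ρ̄,γ̄)`: cyclic permutation of the last three coordinates. -/
def cP : Equiv.Perm (Fin 4 → ℤ) where
  toFun v := ![v 0, v 3, v 1, v 2]
  invFun v := ![v 0, v 2, v 3, v 1]
  left_inv v := by funext i; fin_cases i <;> rfl
  right_inv v := by funext i; fin_cases i <;> rfl

/-- `s_r` negates `ρ̄`, fixing the other coordinates. -/
def srP : Equiv.Perm (Fin 4 → ℤ) where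
  toFun v := ![v 0, -v 1, v 2, v 3]
  invFun v := ![v 0, -v 1, v 2, v 3]
  left_inv v := by funext i; fin_cases i <;> simp
  right_inv v := by funext i; fin_cases i <;> simp

/-- `s_g` negates `γ̄`, fixing the other coordinates. -/
def sgP : Equiv.Perm (Fin 4 → ℤ) where
  toFun v := ![v 0, v 1, -v 2, v 3]
  invFun v := ![v 0, v 1, -v 2, v 3]
  left_inv v := by funext i; fin_cases i <;> simp
  right_inv v := by funext i; fin_cases i <;> simp

/-- `s_b` negates `β̄`, fixing the other coordinates. -/
def sbP : Equiv.Perm (Fin 4 → ℤ) where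
  toFun v := ![v 0, v 1, v 2, -v 3]
  invFun v := ![v 0, v 1, v 2, -v 3]
  left_inv v := by funext i; fin_cases i <;> simp
  right_inv v := by funext i; fin_cases i <;> simp

/-- `Cr` negates all four coordinates. -/
def crP : Equiv.Perm (Fin 4 → ℤ) := Equiv.neg (Fin 4 → ℤ)

/-- The group `Γ₆` acting linearly on `ℤ^4`, generated by `c, s_r, s_g, s_b, Cr`. -/
def Γ6lin : Subgroup (Equiv.Perm (Fin 4 → ℤ)) :=
  Subgroup.closure {cP, srP, sgP, sbP, crP}

/-- The orbit `O_A` of `A = (2,0,0,0)`. -/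
def OA : Set (Fin 4 → ℤ) := MulAction.orbit Γ6lin ![2, 0, 0, 0]
/-- The orbit `O_B` of `B = (1,1,0,0)`. -/
def OB : Set (Fin 4 → ℤ) := MulAction.orbit Γ6lin ![1, 1, 0, 0]
/-- The orbit `O_C` of `C = (1,1,1,1)`. -/
def OC : Set (Fin 4 → ℤ) := MulAction.orbit Γ6lin ![1, 1, 1, 1]
/-- The orbit `O_D` of `D = (0,1,0,1)`. -/
def OD : Set (Fin 4 → ℤ) := MulAction.orbit Γ6lin ![0, 1, 0, 1]

/-- The set `R` of integral generators of the rays of the fan `F₆`. -/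
def RaySet : Set (Fin 4 → ℤ) := OA ∪ OB ∪ OC ∪ OD

lemma h_mem_set (g : Equiv.Perm (Fin 4 → ℤ))
    (hg : g ∈ ({cP, srP, sgP, sbP, crP} : Set (Equiv.Perm (Fin 4 → ℤ)))) : g ∈ Γ6lin :=
  Subgroup.subset_closure hg

lemma h_cP : cP ∈ Γ6lin := h_mem_set _ (by left; rfl)
lemma h_srP : srP ∈ Γ6lin := h_mem_set _ (by right; left; rfl)
lemma h_sgP : sgP ∈ Γ6lin := h_mem_set _ (by right; right; left; rfl)
lemma h_sbP : sbP ∈ Γ6lin := h_mem_set _ (by right; right; right; left; rfl)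
lemma h_crP : crP ∈ Γ6lin := h_mem_set _ (by right; right; right; right; rfl)

lemma orbit_step {x v w : Fin 4 → ℤ} {g : Equiv.Perm (Fin 4 → ℤ)}
    (hg : g ∈ Γ6lin) (hv : v ∈ MulAction.orbit Γ6lin x) (hw : g v = w) :
    w ∈ MulAction.orbit Γ6lin x := by
  obtain ⟨a, ha⟩ := hv
  subst ha hw
  exact ⟨⟨g, hg⟩ * a, by show (⟨g, hg⟩ * a) • x = _; rw [mul_smul]; rfl⟩

lemma orbit_subset {x : Fin 4 → ℤ} {S : Finset (Fin 4 → ℤ)} (hx : x ∈ S)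
    (hstab : ∀ g ∈ ({cP, srP, sgP, sbP, crP} : Set (Equiv.Perm (Fin 4 → ℤ))),
      (∀ v ∈ S, g v ∈ S) ∧ (∀ v ∈ S, g⁻¹ v ∈ S)) :
    MulAction.orbit Γ6lin x ⊆ ↑S := by
  have key : ∀ g ∈ Γ6lin, (∀ v ∈ S, g v ∈ S) ∧ (∀ v ∈ S, g⁻¹ v ∈ S) := by
    intro g hg
    induction hg using Subgroup.closure_induction with
    | mem y hy => exact hstab y hy
    | one => simp
    | mul y z hy hz ihy ihz =>
        exact ⟨fun v hv => ihy.1 _ (ihz.1 v hv), fun v hv => by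
          simpa using ihz.2 _ (ihy.2 v hv)⟩
    | inv y hy ihy => exact ⟨ihy.2, by simpa using ihy.1⟩
  rintro w ⟨a, rfl⟩
  exact (key a.1 a.2).1 x hx

def SA : Finset (Fin 4 → ℤ) := ([(![2,0,0,0] : Fin 4 → ℤ), (![-2,0,0,0] : Fin 4 → ℤ)] : List (Fin 4 → ℤ)).toFinset

lemma OA_eq : OA = ↑SA := by
  apply Set.Subset.antisymm
  · exact orbit_subset (by decide) (by
      rintro g (rfl|rfl|rfl|rfl|rfl) <;> exact ⟨by decide, by decide⟩)
  · have h0 : (![2,0,0,0] : Fin 4 → ℤ) ∈ OA := MulAction.mem_orbit_self _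
    have h1 : (![-2,0,0,0] : Fin 4 → ℤ) ∈ OA := orbit_step h_crP h0 (by decide)
    intro w hw
    rw [Finset.mem_coe, SA, List.mem_toFinset] at hw
    simp only [List.mem_cons, List.not_mem_nil, or_false] at hw
    rcases hw with rfl|rfl
    exacts [h0, h1]

def SB : Finset (Fin 4 → ℤ) := ([(![1,1,0,0] : Fin 4 → ℤ), (![1,0,1,0] : Fin 4 → ℤ), (![1,-1,0,0] : Fin 4 → ℤ), (![-1,-1,0,0] : Fin 4 → ℤ), (![1,0,0,1] : Fin 4 → ℤ), (![1,0,-1,0] : Fin 4 → ℤ), (![-1,0,-1,0] : Fin 4 → ℤ), (![-1,1,0,0] : Fin 4 → ℤ), (![1,0,0,-1] : Fin 4 → ℤ), (![-1,0,0,-1] : Fin 4 → ℤ), (![-1,0,1,0] : Fin 4 → ℤ), (![-1,0,0,1] : Fin 4 → ℤ)] : List (Fin 4 → ℤ)).toFinset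

lemma OB_eq : OB = ↑SB := by
  apply Set.Subset.antisymm
  · exact orbit_subset (by decide) (by
      rintro g (rfl|rfl|rfl|rfl|rfl) <;> exact ⟨by decide, by decide⟩)
  · have h0 : (![1,1,0,0] : Fin 4 → ℤ) ∈ OB := MulAction.mem_orbit_self _
    have h1 : (![1,0,1,0] : Fin 4 → ℤ) ∈ OB := orbit_step h_cP h0 (by decide)
    have h2 : (![1,-1,0,0] : Fin 4 → ℤ) ∈ OB := orbit_step h_srP h0 (by decide)
    have h3 : (![-1,-1,0,0] : Fin 4 → ℤ) ∈ OB := orbit_step h_crP h0 (by decide)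
    have h4 : (![1,0,0,1] : Fin 4 → ℤ) ∈ OB := orbit_step h_cP h1 (by decide)
    have h5 : (![1,0,-1,0] : Fin 4 → ℤ) ∈ OB := orbit_step h_sgP h1 (by decide)
    have h6 : (![-1,0,-1,0] : Fin 4 → ℤ) ∈ OB := orbit_step h_crP h1 (by decide)
    have h7 : (![-1,1,0,0] : Fin 4 → ℤ) ∈ OB := orbit_step h_crP h2 (by decide)
    have h8 : (![1,0,0,-1] : Fin 4 → ℤ) ∈ OB := orbit_step h_sbP h4 (by decide)
    have h9 : (![-1,0,0,-1] : Fin 4 → ℤ) ∈ OB := orbit_step h_crP h4 (by decide)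
    have h10 : (![-1,0,1,0] : Fin 4 → ℤ) ∈ OB := orbit_step h_crP h5 (by decide)
    have h11 : (![-1,0,0,1] : Fin 4 → ℤ) ∈ OB := orbit_step h_crP h8 (by decide)
    intro w hw
    rw [Finset.mem_coe, SB, List.mem_toFinset] at hw
    simp only [List.mem_cons, List.not_mem_nil, or_false] at hw
    rcases hw with rfl|rfl|rfl|rfl|rfl|rfl|rfl|rfl|rfl|rfl|rfl|rfl
    exacts [h0, h1, h2, h3, h4, h5, h6, h7, h8, h9, h10, h11]

def SC : Finset (Fin 4 → ℤ) := ([(![1,1,1,1] : Fin 4 → ℤ), (![1,-1,1,1] : Fin 4 → ℤ), (![1,1,-1,1] : Fin 4 → ℤ), (![1,1,1,-1] : Fin 4 → ℤ), (![-1,-1,-1,-1] : Fin 4 → ℤ), (![1,-1,-1,1] : Fin 4 → ℤ), (![1,-1,1,-1] : Fin 4 → ℤ), (![-1,1,-1,-1] : Fin 4 → ℤ), (![1,1,-1,-1] : Fin 4 → ℤ), (![-1,-1,1,-1] : Fin 4 → ℤ), (![-1,-1,-1,1] : Fin 4 → ℤ), (![1,-1,-1,-1] : Fin 4 → ℤ),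 (![-1,1,1,-1] : Fin 4 → ℤ), (![-1,1,-1,1] : Fin 4 → ℤ), (![-1,-1,1,1] : Fin 4 → ℤ), (![-1,1,1,1] : Fin 4 → ℤ)] : List (Fin 4 → ℤ)).toFinset

lemma OC_eq : OC = ↑SC := by
  apply Set.Subset.antisymm
  · exact orbit_subset (by decide) (by
      rintro g (rfl|rfl|rfl|rfl|rfl) <;> exact ⟨by decide, by decide⟩)
  · have h0 : (![1,1,1,1] : Fin 4 → ℤ) ∈ OC := MulAction.mem_orbit_self _
    have h1 : (![1,-1,1,1] : Fin 4 → ℤ) ∈ OC := orbit_step h_srP h0 (by decide)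
    have h2 : (![1,1,-1,1] : Fin 4 → ℤ) ∈ OC := orbit_step h_sgP h0 (by decide)
    have h3 : (![1,1,1,-1] : Fin 4 → ℤ) ∈ OC := orbit_step h_sbP h0 (by decide)
    have h4 : (![-1,-1,-1,-1] : Fin 4 → ℤ) ∈ OC := orbit_step h_crP h0 (by decide)
    have h5 : (![1,-1,-1,1] : Fin 4 → ℤ) ∈ OC := orbit_step h_sgP h1 (by decide)
    have h6 : (![1,-1,1,-1] : Fin 4 → ℤ) ∈ OC := orbit_step h_sbP h1 (by decide)
    have h7 : (![-1,1,-1,-1] : Fin 4 → ℤ) ∈ OC := orbit_step h_crP h1 (by decide)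
    have h8 : (![1,1,-1,-1] : Fin 4 → ℤ) ∈ OC := orbit_step h_sbP h2 (by decide)
    have h9 : (![-1,-1,1,-1] : Fin 4 → ℤ) ∈ OC := orbit_step h_crP h2 (by decide)
    have h10 : (![-1,-1,-1,1] : Fin 4 → ℤ) ∈ OC := orbit_step h_crP h3 (by decide)
    have h11 : (![1,-1,-1,-1] : Fin 4 → ℤ) ∈ OC := orbit_step h_sbP h5 (by decide)
    have h12 : (![-1,1,1,-1] : Fin 4 → ℤ) ∈ OC := orbit_step h_crP h5 (by decide)
    have h13 : (![-1,1,-1,1] : Fin 4 → ℤ) ∈ OC := orbit_step h_crP h6 (by decide)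
    have h14 : (![-1,-1,1,1] : Fin 4 → ℤ) ∈ OC := orbit_step h_crP h8 (by decide)
    have h15 : (![-1,1,1,1] : Fin 4 → ℤ) ∈ OC := orbit_step h_crP h11 (by decide)
    intro w hw
    rw [Finset.mem_coe, SC, List.mem_toFinset] at hw
    simp only [List.mem_cons, List.not_mem_nil, or_false] at hw
    rcases hw with rfl|rfl|rfl|rfl|rfl|rfl|rfl|rfl|rfl|rfl|rfl|rfl|rfl|rfl|rfl|rfl
    exacts [h0, h1, h2, h3, h4, h5, h6, h7, h8, h9, h10, h11, h12, h13, h14, h15]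

def SD : Finset (Fin 4 → ℤ) := ([(![0,1,0,1] : Fin 4 → ℤ), (![0,1,1,0] : Fin 4 → ℤ), (![0,-1,0,1] : Fin 4 → ℤ), (![0,1,0,-1] : Fin 4 → ℤ), (![0,-1,0,-1] : Fin 4 → ℤ), (![0,0,1,1] : Fin 4 → ℤ), (![0,-1,1,0] : Fin 4 → ℤ), (![0,1,-1,0] : Fin 4 → ℤ), (![0,-1,-1,0] : Fin 4 → ℤ), (![0,0,-1,1] : Fin 4 → ℤ), (![0,0,1,-1] : Fin 4 → ℤ), (![0,0,-1,-1] : Fin 4 → ℤ)] : List (Fin 4 → ℤ)).toFinset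

lemma OD_eq : OD = ↑SD := by
  apply Set.Subset.antisymm
  · exact orbit_subset (by decide) (by
      rintro g (rfl|rfl|rfl|rfl|rfl) <;> exact ⟨by decide, by decide⟩)
  · have h0 : (![0,1,0,1] : Fin 4 → ℤ) ∈ OD := MulAction.mem_orbit_self _
    have h1 : (![0,1,1,0] : Fin 4 → ℤ) ∈ OD := orbit_step h_cP h0 (by decide)
    have h2 : (![0,-1,0,1] : Fin 4 → ℤ) ∈ OD := orbit_step h_srP h0 (by decide)
    have h3 : (![0,1,0,-1] : Fin 4 → ℤ) ∈ OD := orbit_step h_sbP h0 (by decide)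
    have h4 : (![0,-1,0,-1] : Fin 4 → ℤ) ∈ OD := orbit_step h_crP h0 (by decide)
    have h5 : (![0,0,1,1] : Fin 4 → ℤ) ∈ OD := orbit_step h_cP h1 (by decide)
    have h6 : (![0,-1,1,0] : Fin 4 → ℤ) ∈ OD := orbit_step h_srP h1 (by decide)
    have h7 : (![0,1,-1,0] : Fin 4 → ℤ) ∈ OD := orbit_step h_sgP h1 (by decide)
    have h8 : (![0,-1,-1,0] : Fin 4 → ℤ) ∈ OD := orbit_step h_crP h1 (by decide)
    have h9 : (![0,0,-1,1] : Fin 4 → ℤ) ∈ OD := orbit_step h_sgP h5 (by decide)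
    have h10 : (![0,0,1,-1] : Fin 4 → ℤ) ∈ OD := orbit_step h_sbP h5 (by decide)
    have h11 : (![0,0,-1,-1] : Fin 4 → ℤ) ∈ OD := orbit_step h_crP h5 (by decide)
    intro w hw
    rw [Finset.mem_coe, SD, List.mem_toFinset] at hw
    simp only [List.mem_cons, List.not_mem_nil, or_false] at hw
    rcases hw with rfl|rfl|rfl|rfl|rfl|rfl|rfl|rfl|rfl|rfl|rfl|rfl
    exacts [h0, h1, h2, h3, h4, h5, h6, h7, h8, h9, h10, h11]

/-- The orbits `O_A, O_B, O_C, O_D` have cardinalities `2, 12, 16, 12`, are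
pairwise disjoint, and their union `R` has exactly `42` elements. -/
theorem ray_orbits_cardinalities :
    OA.ncard = 2 ∧ OB.ncard = 12 ∧ OC.ncard = 16 ∧ OD.ncard = 12 ∧
    Disjoint OA OB ∧ Disjoint OA OC ∧ Disjoint OA OD ∧
    Disjoint OB OC ∧ Disjoint OB OD ∧ Disjoint OC OD ∧
    RaySet.ncard = 42 := by
  have hR : RaySet = ↑(SA ∪ SB ∪ SC ∪ SD) := by
    rw [RaySet, OA_eq, OB_eq, OC_eq, OD_eq]
    push_cast
    rfl
  refine ⟨?_, ?_, ?_, ?_, (by rw [OA_eq, OB_eq]; exact Finset.disjoint_coe.mpr (by decide)), (by rw [OA_eq, OC_eq]; exact Finset.disjoint_coe.mpr (by decide)), (by rw [OA_eq, OD_eq]; exact Finset.disjoint_coe.mpr (by decide)), (by rw [OB_eq, OC_eq]; exact Finset.disjoint_coe.mpr (by decide)), (by rw [OB_eq, OD_eq]; exact Finset.disjoint_coe.mpr (by decide)), (by rw [OC_eq, OD_eq]; exact Finset.disjoint_coe.mpr (by decide)), ?_⟩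
  · rw [OA_eq, Set.ncard_coe_finset]; decide
  · rw [OB_eq, Set.ncard_coe_finset]; decide
  · rw [OC_eq, Set.ncard_coe_finset]; decide
  · rw [OD_eq, Set.ncard_coe_finset]; decide
  · rw [hR, Set.ncard_coe_finset]; decide
end

section
/- Exactly two elements of the 42-element set R of ray generators lie in the subgroup ℤ·(−1,1,1,1) ⊂ ℤ^4, namely (−1,1,1,1) and (1,−1,−1,−1), and both lie in the orbit O_C of (1,1,1,1) (i.e. both are of type C). Consequently the fan F₃ = F₆ ∩ N₃ of Z₃^tor has exactly two rays, both of type C. -/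
/-- `N₃ = ℤ·(−1,1,1,1)`, the cocharacter lattice of the subtorus `T₃ ⊂ T₆`. -/
def N3 : Set (Fin 4 → ℤ) := Set.range (fun n : ℤ => n • ![(-1 : ℤ), 1, 1, 1])

-- Quadratic invariant
def Qf (v : Fin 4 → ℤ) : ℤ := v 0 ^ 2 + v 1 ^ 2 + v 2 ^ 2 + v 3 ^ 2

def InvSet : Subgroup (Equiv.Perm (Fin 4 → ℤ)) where
  carrier := {g | ∀ v, Qf (g v) = Qf v ∧ (g v 0) ^ 2 = (v 0) ^ 2}
  one_mem' := by intro v; simp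
  mul_mem' := by
    intro a b ha hb v
    have h1 := hb v
    have h2 := ha (b v)
    simp only [Equiv.Perm.mul_apply]
    exact ⟨h2.1.trans h1.1, h2.2.trans h1.2⟩
  inv_mem' := by
    intro a ha v
    have := ha (a⁻¹ v)
    rw [show a (a⁻¹ v) = v from a.apply_symm_apply v] at this
    exact ⟨this.1.symm, this.2.symm⟩

lemma gens_mem : ∀ g ∈ ({cP, srP, sgP, sbP, crP} : Set (Equiv.Perm (Fin 4 → ℤ))), g ∈ InvSet := by
  intro g hg v
  rcases hg with rfl | rfl | rfl | rfl | rfl <;>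
    refine ⟨?_, ?_⟩ <;>
    simp [cP, srP, sgP, sbP, crP, Qf, Equiv.neg_apply] <;> ring

lemma gamma_le : Γ6lin ≤ InvSet := Subgroup.closure_le InvSet |>.mpr gens_mem

lemma orbit_inv {w v : Fin 4 → ℤ} (h : v ∈ MulAction.orbit Γ6lin w) :
    Qf v = Qf w ∧ (v 0) ^ 2 = (w 0) ^ 2 := by
  obtain ⟨⟨g, hg⟩, rfl⟩ := h
  exact gamma_le hg w

lemma mem_gamma : ∀ g ∈ ({cP, srP, sgP, sbP, crP} : Set (Equiv.Perm (Fin 4 → ℤ))), g ∈ Γ6lin :=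
  fun g hg => Subgroup.subset_closure hg

lemma neg_mem_OC : ![(1 : ℤ), -1, -1, -1] ∈ OC := by
  refine ⟨⟨srP * sgP * sbP, mul_mem (mul_mem (mem_gamma _ (by simp)) (mem_gamma _ (by simp)))
    (mem_gamma _ (by simp))⟩, ?_⟩
  show (srP * sgP * sbP) ![(1:ℤ),1,1,1] = _
  funext i; fin_cases i <;> simp [srP, sgP, sbP, Equiv.Perm.mul_apply]

lemma pos_mem_OC : ![(-1 : ℤ), 1, 1, 1] ∈ OC := by
  refine ⟨⟨crP * srP * sgP * sbP, mul_mem (mul_mem (mul_mem (mem_gamma _ (by simp))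
    (mem_gamma _ (by simp))) (mem_gamma _ (by simp))) (mem_gamma _ (by simp))⟩, ?_⟩
  show (crP * srP * sgP * sbP) ![(1:ℤ),1,1,1] = _
  funext i; fin_cases i <;> simp [crP, srP, sgP, sbP, Equiv.Perm.mul_apply, Equiv.neg_apply]

lemma no_half (k : ℤ) : 4 * k ≠ 2 := by omega

/-- Exactly two of the 42 ray generators lie in `N₃ = ℤ·(−1,1,1,1)`, namely
`(−1,1,1,1)` and `(1,−1,−1,−1)`, and both are of type C (lie in `O_C`).
Hence the fan `F₃ = F₆ ∩ N₃` has exactly two rays, both of type C. -/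
theorem rays_in_N3 :
    RaySet ∩ N3 = {![(-1 : ℤ), 1, 1, 1], ![(1 : ℤ), -1, -1, -1]} ∧
    ![(-1 : ℤ), 1, 1, 1] ∈ OC ∧ ![(1 : ℤ), -1, -1, -1] ∈ OC ∧
    (RaySet ∩ N3).ncard = 2 := by

  have hne : ![(-1 : ℤ), 1, 1, 1] ≠ ![(1 : ℤ), -1, -1, -1] := by
    intro h
    have := congrFun h 0
    simp at this
  have hN1 : ![(-1 : ℤ), 1, 1, 1] ∈ N3 := ⟨1, by funext i; fin_cases i <;> simp⟩
  have hN2 : ![(1 : ℤ), -1, -1, -1] ∈ N3 := ⟨-1, by funext i; fin_cases i <;> simp⟩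
  have heq : RaySet ∩ N3 = {![(-1 : ℤ), 1, 1, 1], ![(1 : ℤ), -1, -1, -1]} := by
    apply Set.eq_of_subset_of_subset
    · rintro v ⟨hR, n, rfl⟩
      have hQ : Qf (n • ![(-1 : ℤ), 1, 1, 1]) = 4 * n ^ 2 := by
        simp only [Qf, Pi.smul_apply, smul_eq_mul]
        simp; ring
      have h0 : ((n • ![(-1 : ℤ), 1, 1, 1]) 0) ^ 2 = n ^ 2 := by
        have hx : (n • ![(-1 : ℤ), 1, 1, 1]) 0 = -n := by simp
        rw [hx]; ring
      rcases hR with ((hA | hB) | hC) | hD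
      · obtain ⟨h1, h2⟩ := orbit_inv hA
        rw [hQ] at h1; rw [h0] at h2
        simp [Qf] at h1 h2
        rcases h1 with rfl | rfl <;> norm_num at h2
      · obtain ⟨h1, h2⟩ := orbit_inv hB
        rw [hQ] at h1
        simp [Qf] at h1
        exact absurd h1 (no_half _)
      · obtain ⟨h1, h2⟩ := orbit_inv hC
        rw [hQ] at h1
        simp [Qf] at h1
        rcases h1 with rfl | rfl
        · left; funext i; fin_cases i <;> simp
        · right; funext i; fin_cases i <;> simp
      · obtain ⟨h1, h2⟩ := orbit_inv hD
        rw [hQ] at h1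
        simp [Qf] at h1
        exact absurd h1 (no_half _)
    · rintro v (rfl | rfl)
      · exact ⟨Or.inl (Or.inr pos_mem_OC), hN1⟩
      · exact ⟨Or.inl (Or.inr neg_mem_OC), hN2⟩
  refine ⟨heq, pos_mem_OC, neg_mem_OC, ?_⟩
  rw [heq]
  exact Set.ncard_pair hne
end

section
/- In the group Γ₆ ⊆ Sym(L), the setwise stabilizer of the 3-element set of unordered triples {{R₂,G₁,B₁}, {R₁,G₂,B₁}, {R₁,G₁,B₂}} (under the induced action of Γ₆ on sets of 3-element subsets of L) is exactly the subgroup ⟨c, Cr⟩; it has order 6 and is isomorphic to C₃ × C₂. -/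
open Pointwise

/-- The three distinguished triples `{R₂,G₁,B₁}, {R₁,G₂,B₁}, {R₁,G₁,B₂}`
(the incidence points `P₂₁₁, P₁₂₁, P₁₁₂` of tertiary Burniat configurations). -/
def T3triples : Set (Set (Fin 12)) := {{2, 5, 9}, {1, 6, 9}, {1, 5, 10}}

/-! ### Auxiliary machinery -/

def elt (i : Fin 3) (a b d e : Bool) : Equiv.Perm (Fin 12) :=
  (match i with | 0 => 1 | 1 => cL | 2 => cL * cL) *
  (cond a srL 1) * (cond b sgL 1) * (cond d sbL 1) * (cond e crL 1)

def Q (x y z : Fin 12) : Prop :=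
  ({x, y, z} : Finset (Fin 12)) ∈
    ({{2, 5, 9}, {1, 6, 9}, {1, 5, 10}} : Finset (Finset (Fin 12)))

instance (x y z : Fin 12) : Decidable (Q x y z) := by unfold Q; infer_instance

lemma mem_T_iff (x y z : Fin 12) :
    ({x, y, z} : Set (Fin 12)) ∈ T3triples ↔ Q x y z := by
  simp only [T3triples, Q, Set.mem_insert_iff, Set.mem_singleton_iff,
    Finset.mem_insert, Finset.mem_singleton, ← Finset.coe_inj,
    Finset.coe_insert, Finset.coe_singleton]

lemma smul_triple (g : Equiv.Perm (Fin 12)) (x y z : Fin 12) :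
    g • ({x, y, z} : Set (Fin 12)) = {g x, g y, g z} := by
  simp [Set.smul_set_insert, Set.smul_set_singleton, Equiv.Perm.smul_def]

lemma smul_T (g : Equiv.Perm (Fin 12)) :
    g • T3triples = {g • ({2,5,9} : Set (Fin 12)), g • ({1,6,9} : Set (Fin 12)),
      g • ({1,5,10} : Set (Fin 12))} := by
  simp [T3triples, Set.smul_set_insert, Set.smul_set_singleton]

lemma stab_iff (g : Equiv.Perm (Fin 12)) :
    g • T3triples = T3triples ↔
      Q (g 2) (g 5) (g 9) ∧ Q (g 1) (g 6) (g 9) ∧ Q (g 1) (g 5) (g 10) := by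
  constructor
  · intro h
    refine ⟨?_, ?_, ?_⟩ <;>
      [ (have := (mem_T_iff (g 2) (g 5) (g 9)).mp);
        (have := (mem_T_iff (g 1) (g 6) (g 9)).mp);
        (have := (mem_T_iff (g 1) (g 5) (g 10)).mp) ] <;>
      apply this <;> rw [← smul_triple, ← h]
    · exact Set.smul_mem_smul_set (by left; rfl)
    · exact Set.smul_mem_smul_set (by right; left; rfl)
    · exact Set.smul_mem_smul_set (by right; right; rfl)
  · rintro ⟨h1, h2, h3⟩
    have hsub : g • T3triples ⊆ T3triples := by
      rw [smul_T, smul_triple, smul_triple, smul_triple]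
      rintro s (rfl | rfl | rfl)
      · exact (mem_T_iff _ _ _).mpr h1
      · exact (mem_T_iff _ _ _).mpr h2
      · exact (mem_T_iff _ _ _).mpr h3
    refine Set.eq_of_subset_of_ncard_le hsub ?_ (Set.toFinite _)
    rw [← Set.image_smul, Set.ncard_image_of_injective _ (MulAction.injective g)]

/-! ### Multiplication lemmas -/

set_option maxHeartbeats 1000000 in
theorem mul_cLr : ∀ (i : Fin 3) (a b d e : Bool),
    ∃ k p q r s, elt i a b d e * cL = elt k p q r s := by decide
set_option maxHeartbeats 1000000 in
theorem mul_srLr : ∀ (i : Fin 3) (a b d e : Bool),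
    ∃ k p q r s, elt i a b d e * srL = elt k p q r s := by decide
set_option maxHeartbeats 1000000 in
theorem mul_sgLr : ∀ (i : Fin 3) (a b d e : Bool),
    ∃ k p q r s, elt i a b d e * sgL = elt k p q r s := by decide
set_option maxHeartbeats 1000000 in
theorem mul_sbLr : ∀ (i : Fin 3) (a b d e : Bool),
    ∃ k p q r s, elt i a b d e * sbL = elt k p q r s := by decide
set_option maxHeartbeats 1000000 in
theorem mul_crLr : ∀ (i : Fin 3) (a b d e : Bool),
    ∃ k p q r s, elt i a b d e * crL = elt k p q r s := by decide
set_option maxHeartbeats 1000000 in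
theorem mul_cLi : ∀ (i : Fin 3) (a b d e : Bool),
    ∃ k p q r s, elt i a b d e * cL⁻¹ = elt k p q r s := by decide
set_option maxHeartbeats 1000000 in
theorem mul_srLi : ∀ (i : Fin 3) (a b d e : Bool),
    ∃ k p q r s, elt i a b d e * srL⁻¹ = elt k p q r s := by decide
set_option maxHeartbeats 1000000 in
theorem mul_sgLi : ∀ (i : Fin 3) (a b d e : Bool),
    ∃ k p q r s, elt i a b d e * sgL⁻¹ = elt k p q r s := by decide
set_option maxHeartbeats 1000000 in
theorem mul_sbLi : ∀ (i : Fin 3) (a b d e : Bool),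
    ∃ k p q r s, elt i a b d e * sbL⁻¹ = elt k p q r s := by decide
set_option maxHeartbeats 1000000 in
theorem mul_crLi : ∀ (i : Fin 3) (a b d e : Bool),
    ∃ k p q r s, elt i a b d e * crL⁻¹ = elt k p q r s := by decide

theorem mem_elt_of_mem_Γ6 {g : Equiv.Perm (Fin 12)} (hg : g ∈ Γ6) :
    ∃ i a b d e, g = elt i a b d e := by
  unfold Γ6 at hg
  induction hg using Subgroup.closure_induction_right with
  | one => exact ⟨0, false, false, false, false, by decide⟩
  | mul_right x hx y hy ih =>
    obtain ⟨i, a, b, d, e, rfl⟩ := ih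
    rcases hy with rfl | rfl | rfl | rfl | rfl
    · obtain ⟨k, p, q, r, s, h⟩ := mul_cLr i a b d e; exact ⟨k, p, q, r, s, h⟩
    · obtain ⟨k, p, q, r, s, h⟩ := mul_srLr i a b d e; exact ⟨k, p, q, r, s, h⟩
    · obtain ⟨k, p, q, r, s, h⟩ := mul_sgLr i a b d e; exact ⟨k, p, q, r, s, h⟩
    · obtain ⟨k, p, q, r, s, h⟩ := mul_sbLr i a b d e; exact ⟨k, p, q, r, s, h⟩
    · obtain ⟨k, p, q, r, s, h⟩ := mul_crLr i a b d e; exact ⟨k, p, q, r, s, h⟩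
  | mul_inv_cancel x hx y hy ih =>
    obtain ⟨i, a, b, d, e, rfl⟩ := ih
    rcases hy with rfl | rfl | rfl | rfl | rfl
    · obtain ⟨k, p, q, r, s, h⟩ := mul_cLi i a b d e; exact ⟨k, p, q, r, s, h⟩
    · obtain ⟨k, p, q, r, s, h⟩ := mul_srLi i a b d e; exact ⟨k, p, q, r, s, h⟩
    · obtain ⟨k, p, q, r, s, h⟩ := mul_sgLi i a b d e; exact ⟨k, p, q, r, s, h⟩
    · obtain ⟨k, p, q, r, s, h⟩ := mul_sbLi i a b d e; exact ⟨k, p, q, r, s, h⟩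
    · obtain ⟨k, p, q, r, s, h⟩ := mul_crLi i a b d e; exact ⟨k, p, q, r, s, h⟩

set_option maxHeartbeats 1000000 in
theorem stab_param : ∀ (i : Fin 3) (a b d e : Bool),
    Q (elt i a b d e 2) (elt i a b d e 5) (elt i a b d e 9) ∧
    Q (elt i a b d e 1) (elt i a b d e 6) (elt i a b d e 9) ∧
    Q (elt i a b d e 1) (elt i a b d e 5) (elt i a b d e 10) →
    a = false ∧ b = false ∧ d = false := by decide

lemma hc_mem : cL ∈ Subgroup.closure ({cL, crL} : Set (Equiv.Perm (Fin 12))) :=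
  Subgroup.subset_closure (by left; rfl)
lemma hcr_mem : crL ∈ Subgroup.closure ({cL, crL} : Set (Equiv.Perm (Fin 12))) :=
  Subgroup.subset_closure (by right; rfl)

lemma elt_good (i : Fin 3) (e : Bool) :
    elt i false false false e ∈ Subgroup.closure ({cL, crL} : Set (Equiv.Perm (Fin 12))) := by
  unfold elt
  fin_cases i <;> cases e <;>
    simp only [cond, mul_one, one_mul] <;>
    solve_by_elim [mul_mem, one_mem, hc_mem, hcr_mem]


lemma hz : Subgroup.closure ({cL, crL} : Set (Equiv.Perm (Fin 12))) =
    Subgroup.zpowers (cL * crL) := by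
  apply le_antisymm
  · rw [Subgroup.closure_le]
    rintro g (rfl | rfl)
    · refine Subgroup.mem_zpowers_iff.mpr ⟨(4 : ℤ), ?_⟩
      rw [show (4 : ℤ) = ((4 : ℕ) : ℤ) from rfl, zpow_natCast]
      decide
    · refine Subgroup.mem_zpowers_iff.mpr ⟨(3 : ℤ), ?_⟩
      rw [show (3 : ℤ) = ((3 : ℕ) : ℤ) from rfl, zpow_natCast]
      decide
  · exact Subgroup.zpowers_le.mpr (mul_mem hc_mem hcr_mem)

lemma horder : orderOf (cL * crL) = 6 := by
  rw [orderOf_eq_iff (by norm_num)]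
  constructor
  · set_option maxRecDepth 100000 in decide
  · intro m hm hm' ; interval_cases m <;> decide

lemma hcard : Nat.card (Subgroup.closure {cL, crL} : Subgroup (Equiv.Perm (Fin 12))) = 6 := by
  rw [hz, Nat.card_zpowers, horder]

instance hcyc : IsCyclic (Subgroup.closure ({cL, crL} : Set (Equiv.Perm (Fin 12)))) := by
  apply isCyclic_of_orderOf_eq_card
    (⟨cL * crL, hz ▸ Subgroup.mem_zpowers _⟩ :
      (Subgroup.closure ({cL, crL} : Set (Equiv.Perm (Fin 12)))))
  rw [Subgroup.orderOf_mk, horder, hcard]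

lemma hcard2 : Nat.card (Multiplicative (ZMod 3) × Multiplicative (ZMod 2)) = 6 := by
  simp [Nat.card_eq_fintype_card]

instance hcyc2 : IsCyclic (Multiplicative (ZMod 3) × Multiplicative (ZMod 2)) := by
  apply isCyclic_of_orderOf_eq_card
    ((Multiplicative.ofAdd 1, Multiplicative.ofAdd 1) :
      Multiplicative (ZMod 3) × Multiplicative (ZMod 2))
  rw [hcard2, orderOf_eq_iff (by norm_num)]
  constructor
  · decide
  · intro m hm hm' ; interval_cases m <;> decide

/-- The setwise stabilizer in `Γ₆` of `{{R₂,G₁,B₁}, {R₁,G₂,B₁}, {R₁,G₁,B₂}}` is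
exactly `⟨c, Cr⟩`; it has order 6 and is isomorphic to `C₃ × C₂`. -/
theorem stabilizer_deg3 :
    Γ6 ⊓ MulAction.stabilizer (Equiv.Perm (Fin 12)) T3triples =
      Subgroup.closure {cL, crL} ∧
    Nat.card (Subgroup.closure {cL, crL} : Subgroup (Equiv.Perm (Fin 12))) = 6 ∧
    Nonempty ((Subgroup.closure {cL, crL} : Subgroup (Equiv.Perm (Fin 12))) ≃*
      Multiplicative (ZMod 3) × Multiplicative (ZMod 2)) := by
  have hmain : Γ6 ⊓ MulAction.stabilizer (Equiv.Perm (Fin 12)) T3triples =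
      Subgroup.closure {cL, crL} := by
    apply le_antisymm
    · rintro g ⟨hg6, hgs⟩
      obtain ⟨i, a, b, d, e, rfl⟩ := mem_elt_of_mem_Γ6 hg6
      have hst := (stab_iff _).mp (MulAction.mem_stabilizer_iff.mp hgs)
      obtain ⟨rfl, rfl, rfl⟩ := stab_param i a b d e hst
      exact elt_good i e
    · rw [Subgroup.closure_le]
      rintro g (rfl | rfl)
      · exact Subgroup.mem_inf.mpr ⟨Subgroup.subset_closure (by left; rfl),
          MulAction.mem_stabilizer_iff.mpr ((stab_iff cL).mpr (by decide))⟩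
      · exact Subgroup.mem_inf.mpr ⟨Subgroup.subset_closure (by right; right; right; right; rfl),
          MulAction.mem_stabilizer_iff.mpr ((stab_iff crL).mpr (by decide))⟩
  exact ⟨hmain, hcard, ⟨mulEquivOfCyclicCardEq (by rw [hcard, hcard2])⟩⟩
end

section
/- The subgroup N₄ₐ := {(δ,ρ̄,γ̄,β̄) ∈ ℤ^4 : δ+ρ̄+γ̄+β̄ = 0 and δ−ρ̄−γ̄−β̄ = 0} equals {(δ,ρ̄,γ̄,β̄) ∈ ℤ^4 : δ = 0 and ρ̄+γ̄+β̄ = 0}, and exactly six elements of the 42-element set R of ray generators lie in N₄ₐ, namely ±(0,1,−1,0), ±(0,0,1,−1), ±(0,−1,0,1); all six lie in the orbit O_D of (0,1,0,1) (i.e. all are of type D). Hence the fan F₄ₐ = F₆ ∩ N₄ₐ has exactly 6 rays, all of type D. -/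
/-- `N₄ₐ`, the cocharacter lattice of the subtorus `T₄ₐ ⊂ T₆` defined by
`r₁g₁b₁ = r₂g₂b₂ = 1`: `{(δ,ρ̄,γ̄,β̄) : δ = 0 and ρ̄+γ̄+β̄ = 0}`. -/
def N4a : Set (Fin 4 → ℤ) := {v | v 0 = 0 ∧ v 1 + v 2 + v 3 = 0}

/-! The group `Γ₆` acts by signed permutations fixing the position of `δ`, so `|δ|` and
`|ρ̄| + |γ̄| + |β̄|` are constant on its orbits. On the four orbits they take the values
`(2,0), (1,1), (1,3), (0,2)`, so a ray generator with `δ = 0` is of type D and satisfies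
`|ρ̄| + |γ̄| + |β̄| = 2`; together with `ρ̄ + γ̄ + β̄ = 0` this leaves exactly the six
vectors with one entry `1`, one entry `-1` and one entry `0` among `ρ̄, γ̄, β̄`. -/

section InvariantOnClosure

variable {α β : Type*} {s : Set (Equiv.Perm α)} {f : α → β}

theorem apply_eq_of_mem_closure (hs : ∀ g ∈ s, ∀ v, f (g v) = f v)
    {g : Equiv.Perm α} (hg : g ∈ Subgroup.closure s) (v : α) : f (g v) = f v := by
  induction hg using Subgroup.closure_induction generalizing v with
  | mem g hg => exact hs g hg v
  | one => rfl
  | mul a b _ _ iha ihb => exact (iha (b v)).trans (ihb v)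
  | inv a _ ih => simpa using (ih (a⁻¹ v)).symm

theorem apply_eq_of_mem_orbit_closure (hs : ∀ g ∈ s, ∀ v, f (g v) = f v) {x y : α}
    (hy : y ∈ MulAction.orbit (Subgroup.closure s) x) : f y = f x := by
  obtain ⟨⟨g, hg⟩, rfl⟩ := hy
  exact apply_eq_of_mem_closure hs hg x

end InvariantOnClosure

def absProfile (v : Fin 4 → ℤ) : ℤ × ℤ := (|v 0|, |v 1| + |v 2| + |v 3|)

theorem absProfile_eq_of_mem_orbit {x y : Fin 4 → ℤ} (hy : y ∈ MulAction.orbit Γ6lin x) :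
    absProfile y = absProfile x := by
  refine apply_eq_of_mem_orbit_closure (fun g hg v => ?_) hy
  simp only [Set.mem_insert_iff, Set.mem_singleton_iff] at hg
  rcases hg with rfl | rfl | rfl | rfl | rfl <;>
    simp [absProfile, cP, srP, sgP, sbP, crP, add_assoc, add_comm, add_left_comm]

theorem absProfile_mem_of_mem_RaySet {v : Fin 4 → ℤ} (hv : v ∈ RaySet) :
    absProfile v ∈ ({(2, 0), (1, 1), (1, 3), (0, 2)} : Set (ℤ × ℤ)) := by
  rcases hv with ((hv | hv) | hv) | hv <;> rw [absProfile_eq_of_mem_orbit hv] <;>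
    simp [absProfile]

def raysN4a : Set (Fin 4 → ℤ) :=
  {![0, 1, -1, 0], ![0, -1, 1, 0], ![0, 0, 1, -1], ![0, 0, -1, 1], ![0, -1, 0, 1], ![0, 1, 0, -1]}

theorem mem_raysN4a_iff {v : Fin 4 → ℤ} :
    v ∈ raysN4a ↔ v ∈ N4a ∧ |v 1| + |v 2| + |v 3| = 2 := by
  simp only [raysN4a, N4a, Set.mem_insert_iff, Set.mem_singleton_iff, Set.mem_ofPred_eq,
    funext_iff, Fin.forall_fin_succ, Fin.isValue, Matrix.cons_val_zero,
    Matrix.cons_val_succ, Matrix.cons_val_fin_one, Fin.succ_zero_eq_one,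
    Fin.succ_one_eq_two, Fin.reduceSucc, Int.reduceNeg, IsEmpty.forall_iff, and_true]
  -- once the signs of `ρ̄, γ̄, β̄` are fixed, both sides are linear
  rcases abs_cases (v 1) with ⟨h1, _⟩ | ⟨h1, _⟩ <;> rcases abs_cases (v 2) with ⟨h2, _⟩ | ⟨h2, _⟩ <;>
    rcases abs_cases (v 3) with ⟨h3, _⟩ | ⟨h3, _⟩ <;> rw [h1, h2, h3] <;> omega

theorem mem_OD_of_apply_eq {g : Equiv.Perm (Fin 4 → ℤ)} (hg : g ∈ Γ6lin) {v : Fin 4 → ℤ}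
    (hv : g ![0, 1, 0, 1] = v) : v ∈ OD :=
  ⟨⟨g, hg⟩, hv⟩

theorem raysN4a_subset_OD : raysN4a ⊆ OD := by
  have hc : cP ∈ Γ6lin := Subgroup.subset_closure (by simp)
  have hr : srP ∈ Γ6lin := Subgroup.subset_closure (by simp)
  have hg : sgP ∈ Γ6lin := Subgroup.subset_closure (by simp)
  have hb : sbP ∈ Γ6lin := Subgroup.subset_closure (by simp)
  rintro v (rfl | rfl | rfl | rfl | rfl | rfl)
  · exact mem_OD_of_apply_eq (mul_mem hg hc) (by decide)
  · exact mem_OD_of_apply_eq (mul_mem hr hc) (by decide)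
  · exact mem_OD_of_apply_eq (mul_mem (mul_mem hb hc) hc) (by decide)
  · exact mem_OD_of_apply_eq (mul_mem (mul_mem hg hc) hc) (by decide)
  · exact mem_OD_of_apply_eq hr (by decide)
  · exact mem_OD_of_apply_eq hb (by decide)

theorem RaySet_inter_N4a : RaySet ∩ N4a = raysN4a := by
  ext v
  refine ⟨fun ⟨hR, hN⟩ => mem_raysN4a_iff.2 ⟨hN, ?_⟩,
    fun hv => ⟨Or.inr (raysN4a_subset_OD hv), (mem_raysN4a_iff.1 hv).1⟩⟩
  have h0 : v 0 = 0 := hN.1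
  have hprofile := absProfile_mem_of_mem_RaySet hR
  simp only [absProfile, h0, abs_zero, Set.mem_insert_iff, Set.mem_singleton_iff,
    Prod.mk.injEq] at hprofile
  omega

theorem ncard_raysN4a : raysN4a.ncard = 6 := by
  rw [raysN4a, Set.ncard_eq_toFinset_card']
  decide

/-- `{δ+ρ̄+γ̄+β̄ = 0, δ−ρ̄−γ̄−β̄ = 0}` equals `{δ = 0, ρ̄+γ̄+β̄ = 0}`, and exactly
six of the 42 ray generators lie in it, namely `±(0,1,−1,0), ±(0,0,1,−1),
±(0,−1,0,1)`, all of type D. Hence `F₄ₐ = F₆ ∩ N₄ₐ` has exactly 6 rays, all of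
type D. -/
theorem rays_in_N4a :
    {v : Fin 4 → ℤ | v 0 + v 1 + v 2 + v 3 = 0 ∧ v 0 - v 1 - v 2 - v 3 = 0} = N4a ∧
    RaySet ∩ N4a =
      {![(0 : ℤ), 1, -1, 0], ![(0 : ℤ), -1, 1, 0],
       ![(0 : ℤ), 0, 1, -1], ![(0 : ℤ), 0, -1, 1],
       ![(0 : ℤ), -1, 0, 1], ![(0 : ℤ), 1, 0, -1]} ∧
    ![(0 : ℤ), 1, -1, 0] ∈ OD ∧ ![(0 : ℤ), -1, 1, 0] ∈ OD ∧
    ![(0 : ℤ), 0, 1, -1] ∈ OD ∧ ![(0 : ℤ), 0, -1, 1] ∈ OD ∧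
    ![(0 : ℤ), -1, 0, 1] ∈ OD ∧ ![(0 : ℤ), 1, 0, -1] ∈ OD ∧
    (RaySet ∩ N4a).ncard = 6 := by
  have hD := raysN4a_subset_OD
  refine ⟨?_, RaySet_inter_N4a, hD (by simp [raysN4a]), hD (by simp [raysN4a]),
    hD (by simp [raysN4a]), hD (by simp [raysN4a]), hD (by simp [raysN4a]),
    hD (by simp [raysN4a]), RaySet_inter_N4a ▸ ncard_raysN4a⟩
  ext v
  simp only [N4a, Set.mem_ofPred_eq]
  omega
end

section
/- In the group Γ₆ ⊆ Sym(L), the setwise stabilizer of the pair of unordered triples {{R₁,G₁,B₁}, {R₂,G₂,B₂}} is exactly the subgroup ⟨c, s_r∘s_g∘s_b, Cr⟩; it has order 12 and is isomorphic to C₃ × C₂ × C₂. -/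
open Pointwise

/-- The pair of distinguished triples `{R₁,G₁,B₁}, {R₂,G₂,B₂}` (the incidence
points `P₁₁₁` and `P₂₂₂` of degree-4 non-nodal Burniat configurations). -/
def T4atriples : Set (Set (Fin 12)) := {{1, 5, 9}, {2, 6, 10}}

/-! ### Auxiliary material: normal forms for elements of `Γ₆` -/

/-- Exponent vectors for the three commuting swaps. -/
abbrev V3 := Fin 2 × Fin 2 × Fin 2

/-- Normal-form parameters `c^i (s_r^a s_g^b s_b^d) Cr^e` for elements of `Γ₆`. -/
abbrev NF := Fin 3 × V3 × Fin 2

/-- The product of swaps `s_r^a s_g^b s_b^d`. -/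
def sigma3 (v : V3) : Equiv.Perm (Fin 12) :=
  srL ^ v.1.val * sgL ^ v.2.1.val * sbL ^ v.2.2.val

/-- The element `c^i (s_r^a s_g^b s_b^d) Cr^e`. -/
def gammaFun (p : NF) : Equiv.Perm (Fin 12) :=
  cL ^ p.1.val * sigma3 p.2.1 * crL ^ p.2.2.val

/-- Componentwise addition on exponent vectors. -/
def vadd (u w : V3) : V3 := (u.1 + w.1, u.2.1 + w.2.1, u.2.2 + w.2.2)

/-- Cyclic rotation of the three swap exponents (conjugation by `c^k`). -/
def rotv : Fin 3 → V3 → V3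
  | 0, v => v
  | 1, (a, b, d) => (d, a, b)
  | 2, (a, b, d) => (b, d, a)

/-- Multiplication in normal-form coordinates. -/
def mulNF : NF → NF → NF
  | (i, v, e), (j, w, f) => (i + j, vadd (rotv (-j) v) w, e + f)

/-- Inversion in normal-form coordinates. -/
def invNF : NF → NF
  | (i, v, e) => (-i, rotv i v, e)

/-! Commutation relations, each verified by a small `decide`. -/

lemma L1 : ∀ (e : Fin 2) (j : Fin 3), crL ^ e.val * cL ^ j.val = cL ^ j.val * crL ^ e.val := by
  decide

lemma L2 : ∀ (e : Fin 2) (w : V3), crL ^ e.val * sigma3 w = sigma3 w * crL ^ e.val := by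
  decide

lemma L3 : ∀ (v : V3) (j : Fin 3),
    sigma3 v * cL ^ j.val = cL ^ j.val * sigma3 (rotv (-j) v) := by decide

lemma L4 : ∀ i j : Fin 3, cL ^ i.val * cL ^ j.val = cL ^ (i + j).val := by decide

lemma L5 : ∀ v w : V3, sigma3 v * sigma3 w = sigma3 (vadd v w) := by decide

lemma L6 : ∀ e f : Fin 2, crL ^ e.val * crL ^ f.val = crL ^ (e + f).val := by decide

/-- Continuation forms for associativity-normalized rewriting. -/
lemma L1c (e : Fin 2) (j : Fin 3) (x : Equiv.Perm (Fin 12)) :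
    crL ^ e.val * (cL ^ j.val * x) = cL ^ j.val * (crL ^ e.val * x) := by
  rw [← mul_assoc, L1, mul_assoc]

lemma L2c (e : Fin 2) (w : V3) (x : Equiv.Perm (Fin 12)) :
    crL ^ e.val * (sigma3 w * x) = sigma3 w * (crL ^ e.val * x) := by
  rw [← mul_assoc, L2, mul_assoc]

lemma L3c (v : V3) (j : Fin 3) (x : Equiv.Perm (Fin 12)) :
    sigma3 v * (cL ^ j.val * x) = cL ^ j.val * (sigma3 (rotv (-j) v) * x) := by
  rw [← mul_assoc, L3, mul_assoc]

lemma L5c (v w : V3) (x : Equiv.Perm (Fin 12)) :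
    sigma3 v * (sigma3 w * x) = sigma3 (vadd v w) * x := by
  rw [← mul_assoc, L5]

lemma mulNF_correct : ∀ p q : NF, gammaFun p * gammaFun q = gammaFun (mulNF p q) := by
  rintro ⟨i, v, e⟩ ⟨j, w, f⟩
  show cL ^ i.val * sigma3 v * crL ^ e.val * (cL ^ j.val * sigma3 w * crL ^ f.val) =
    cL ^ (i + j).val * sigma3 (vadd (rotv (-j) v) w) * crL ^ (e + f).val
  simp only [mul_assoc]
  rw [L1c, L2c, L6, L3c, L5c, ← mul_assoc, ← mul_assoc, L4, mul_assoc]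

lemma gammaFun_one : gammaFun (0, (0, 0, 0), 0) = 1 := by decide

lemma mulNF_inv : ∀ p : NF, mulNF p (invNF p) = (0, (0, 0, 0), 0) := by decide

lemma invNF_correct (p : NF) : (gammaFun p)⁻¹ = gammaFun (invNF p) :=
  inv_eq_of_mul_eq_one_right (by rw [mulNF_correct, mulNF_inv, gammaFun_one])

/-- `Γ₆` as an explicit set of normal forms. -/
def Gsub : Subgroup (Equiv.Perm (Fin 12)) where
  carrier := Set.range gammaFun
  one_mem' := ⟨(0, (0, 0, 0), 0), gammaFun_one⟩
  mul_mem' := by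
    rintro a b ⟨p, rfl⟩ ⟨q, rfl⟩
    exact ⟨mulNF p q, (mulNF_correct p q).symm⟩
  inv_mem' := by
    rintro a ⟨p, rfl⟩
    exact ⟨invNF p, (invNF_correct p).symm⟩

lemma Γ6_le_Gsub : Γ6 ≤ Gsub := by
  rw [Γ6, Subgroup.closure_le]
  rintro x (rfl | rfl | rfl | rfl | rfl)
  · exact ⟨(1, (0, 0, 0), 0), by decide⟩
  · exact ⟨(0, (1, 0, 0), 0), by decide⟩
  · exact ⟨(0, (0, 1, 0), 0), by decide⟩
  · exact ⟨(0, (0, 0, 1), 0), by decide⟩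
  · exact ⟨(0, (0, 0, 0), 1), by decide⟩

/-- Parameter group for the stabilizer. -/
abbrev D := Multiplicative (ZMod 3) × Multiplicative (ZMod 2) × Multiplicative (ZMod 2)

def hFun : D → Equiv.Perm (Fin 12) :=
  fun p => cL ^ (Multiplicative.toAdd p.1).val * (srL * sgL * sbL) ^
    (Multiplicative.toAdd p.2.1).val * crL ^ (Multiplicative.toAdd p.2.2).val

set_option maxRecDepth 40000 in
def hHom : D →* Equiv.Perm (Fin 12) where
  toFun := hFun
  map_one' := by decide
  map_mul' := by decide

/-- Membership conditions for the two triples. -/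
def memA (x : Fin 12) : Prop := x = 1 ∨ x = 5 ∨ x = 9
def memB (x : Fin 12) : Prop := x = 2 ∨ x = 6 ∨ x = 10

instance : DecidablePred memA := fun x => inferInstanceAs (Decidable (_ ∨ _))
instance : DecidablePred memB := fun x => inferInstanceAs (Decidable (_ ∨ _))

def stabCond (g : Equiv.Perm (Fin 12)) : Prop :=
  ((∀ x, memA (g⁻¹ • x) ↔ memA x) ∧ (∀ x, memB (g⁻¹ • x) ↔ memB x)) ∨
  ((∀ x, memA (g⁻¹ • x) ↔ memB x) ∧ (∀ x, memB (g⁻¹ • x) ↔ memA x))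

instance : DecidablePred stabCond := fun _ => inferInstanceAs (Decidable (_ ∨ _))

lemma smul_set_eq_iff (g : Equiv.Perm (Fin 12)) (S T : Set (Fin 12)) :
    g • S = T ↔ ∀ x, g⁻¹ • x ∈ S ↔ x ∈ T := by
  rw [Set.ext_iff]
  simp [Set.mem_smul_set_iff_inv_smul_mem]

lemma stab_iff_s10 (g : Equiv.Perm (Fin 12)) :
    g ∈ MulAction.stabilizer (Equiv.Perm (Fin 12)) T4atriples ↔ stabCond g := by
  rw [MulAction.mem_stabilizer_iff]
  have hT : T4atriples = {({1, 5, 9} : Set (Fin 12)), {2, 6, 10}} := rfl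
  rw [hT, Set.smul_set_insert, Set.smul_set_singleton, Set.pair_eq_pair_iff,
    smul_set_eq_iff, smul_set_eq_iff, smul_set_eq_iff, smul_set_eq_iff]
  exact Iff.rfl

set_option maxRecDepth 40000 in
lemma key_scan : ∀ p : NF, stabCond (gammaFun p) → ∃ q : D, hFun q = gammaFun p := by
  decide

lemma closure_eq_range :
    Subgroup.closure {cL, srL * sgL * sbL, crL} = hHom.range := by
  apply le_antisymm
  · rw [Subgroup.closure_le]
    rintro x (rfl | rfl | rfl)
    · exact ⟨(Multiplicative.ofAdd 1, 1, 1), by decide⟩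
    · exact ⟨(1, Multiplicative.ofAdd 1, 1), by decide⟩
    · exact ⟨(1, 1, Multiplicative.ofAdd 1), by decide⟩
  · rintro x ⟨q, rfl⟩
    show hFun q ∈ _
    unfold hFun
    refine mul_mem (mul_mem (pow_mem ?_ _) (pow_mem ?_ _)) (pow_mem ?_ _) <;>
      apply Subgroup.subset_closure <;> simp

set_option maxRecDepth 40000 in
lemma hFun_injective : ∀ a b : D, hFun a = hFun b → a = b := by decide

noncomputable def hEquiv : D ≃* hHom.range :=
  MulEquiv.ofBijective hHom.rangeRestrict
    ⟨fun a b h => hFun_injective a b (congrArg Subtype.val h),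
     hHom.rangeRestrict_surjective⟩

/-- The setwise stabilizer in `Γ₆` of `{{R₁,G₁,B₁}, {R₂,G₂,B₂}}` is exactly
`⟨c, s_r∘s_g∘s_b, Cr⟩`; it has order 12 and is isomorphic to `C₃ × C₂ × C₂`. -/
theorem stabilizer_deg4a :
    Γ6 ⊓ MulAction.stabilizer (Equiv.Perm (Fin 12)) T4atriples =
      Subgroup.closure {cL, srL * sgL * sbL, crL} ∧
    Nat.card
      (Subgroup.closure {cL, srL * sgL * sbL, crL} : Subgroup (Equiv.Perm (Fin 12))) = 12 ∧
    Nonempty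
      ((Subgroup.closure {cL, srL * sgL * sbL, crL} : Subgroup (Equiv.Perm (Fin 12))) ≃*
        Multiplicative (ZMod 3) × Multiplicative (ZMod 2) × Multiplicative (ZMod 2)) := by
  refine ⟨?_, ?_, ?_⟩
  · apply le_antisymm
    · rintro g ⟨hg1, hg2⟩
      obtain ⟨p, rfl⟩ := Γ6_le_Gsub hg1
      obtain ⟨q, hq⟩ := key_scan p ((stab_iff_s10 _).mp hg2)
      rw [closure_eq_range]
      exact ⟨q, hq⟩
    · apply le_inf
      · rw [Subgroup.closure_le]
        rintro x (rfl | rfl | rfl)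
        · exact Subgroup.subset_closure (by simp)
        · exact mul_mem (mul_mem (Subgroup.subset_closure (by simp))
            (Subgroup.subset_closure (by simp))) (Subgroup.subset_closure (by simp))
        · exact Subgroup.subset_closure (by simp)
      · rw [Subgroup.closure_le]
        rintro x (rfl | rfl | rfl) <;> rw [SetLike.mem_coe, stab_iff_s10] <;> decide
  · rw [closure_eq_range, Nat.card_congr hEquiv.symm.toEquiv]
    simp [Nat.card_eq_fintype_card]
  · rw [closure_eq_range]
    exact ⟨hEquiv.symm⟩
end

section
/- The element s_r∘s_g∘s_b∘Cr of Γ₆ acts as the identity on the sublattice N₄ₐ = {(δ,ρ̄,γ̄,β̄) ∈ ℤ^4 : δ = 0, ρ̄+γ̄+β̄ = 0}, and the kernel of the induced action homomorphism from Γ₄ₐ = ⟨c, s_r∘s_g∘s_b, Cr⟩ to the automorphism group of N₄ₐ is exactly the order-2 subgroup {id, s_r∘s_g∘s_b∘Cr}; the quotient group of order 6, isomorphic to C₃ × S₂, acts faithfully on N₄ₐ. -/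
/-- The degree-4 non-nodal relabeling group `Γ₄ₐ = ⟨c, s_r∘s_g∘s_b, Cr⟩`
acting linearly on `ℤ^4`. -/
def Γ4alin : Subgroup (Equiv.Perm (Fin 4 → ℤ)) :=
  Subgroup.closure {cP, srP * sgP * sbP, crP}

/-- `τ = s_r∘s_g∘s_b∘Cr`. -/
def τP : Equiv.Perm (Fin 4 → ℤ) := srP * sgP * sbP * crP

/-!
The generators `c`, `σ = s_r∘s_g∘s_b` and `Cr` of `Γ₄ₐ` commute pairwise and have orders `3, 2, 2`,
so `(k, a, b) ↦ c^k σ^a Cr^b` maps `C₃ × C₂ × C₂` onto `Γ₄ₐ`. The element `τ = σ Cr` only negates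
`δ`, so it fixes `N₄ₐ`. A finite check shows that the only parameters whose image fixes the
vector `(0, 1, -1, 0) ∈ N₄ₐ` are those of `1` and `τ`; this gives the kernel, and since `τ ≠ 1`
it also makes the parametrization injective, so `|Γ₄ₐ| = 12`.
-/

section ZModPowHom

variable {G : Type*} [Group G] {n : ℕ}

def zmodPowHom (g : G) (hg : g ^ n = 1) : Multiplicative (ZMod n) →* G :=
  AddMonoidHom.toMultiplicativeLeft <|
    ZMod.lift n
      ⟨zmultiplesHom (Additive G) (.ofMul g), by simpa using congrArg Additive.ofMul hg⟩

@[simp]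
lemma zmodPowHom_ofAdd_intCast {g : G} (hg : g ^ n = 1) (k : ℤ) :
    zmodPowHom g hg (.ofAdd k) = g ^ k := by
  simp [zmodPowHom]

@[simp]
lemma zmodPowHom_ofAdd_one {g : G} (hg : g ^ n = 1) : zmodPowHom g hg (.ofAdd 1) = g := by
  simpa using zmodPowHom_ofAdd_intCast hg 1

lemma exists_zmodPowHom_eq_zpow {g : G} (hg : g ^ n = 1) (x : Multiplicative (ZMod n)) :
    ∃ k : ℤ, zmodPowHom g hg x = g ^ k := by
  obtain ⟨k, hk⟩ := ZMod.intCast_surjective x.toAdd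
  exact ⟨k, by rw [← ofAdd_toAdd x, ← hk, zmodPowHom_ofAdd_intCast]⟩

lemma range_zmodPowHom {g : G} (hg : g ^ n = 1) :
    (zmodPowHom g hg).range = Subgroup.zpowers g := by
  ext y
  constructor
  · rintro ⟨x, rfl⟩
    obtain ⟨k, hk⟩ := exists_zmodPowHom_eq_zpow hg x
    exact hk ▸ Subgroup.zpow_mem_zpowers g k
  · rintro ⟨k, rfl⟩
    exact ⟨.ofAdd k, zmodPowHom_ofAdd_intCast hg k⟩

lemma Commute.zmodPowHom {m n : ℕ} {g h : G} (hgh : Commute g h) (hg : g ^ m = 1)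
    (hh : h ^ n = 1) (x : Multiplicative (ZMod m)) (y : Multiplicative (ZMod n)) :
    Commute (zmodPowHom g hg x) (zmodPowHom h hh y) := by
  obtain ⟨k, hk⟩ := exists_zmodPowHom_eq_zpow hg x
  obtain ⟨l, hl⟩ := exists_zmodPowHom_eq_zpow hh y
  rw [hk, hl]
  exact hgh.zpow_zpow k l

end ZModPowHom

section ZModPowHom₃

variable {G : Type*} [Group G] {l m n : ℕ} {a b c : G}

def zmodPowHom₃ (ha : a ^ l = 1) (hb : b ^ m = 1) (hc : c ^ n = 1) (hab : Commute a b)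
    (hac : Commute a c) (hbc : Commute b c) :
    Multiplicative (ZMod l) × Multiplicative (ZMod m) × Multiplicative (ZMod n) →* G :=
  (zmodPowHom a ha).noncommCoprod ((zmodPowHom b hb).noncommCoprod (zmodPowHom c hc)
      (hbc.zmodPowHom hb hc))
    fun x y => (hab.zmodPowHom ha hb x y.1).mul_right (hac.zmodPowHom ha hc x y.2)

lemma range_zmodPowHom₃ (ha : a ^ l = 1) (hb : b ^ m = 1) (hc : c ^ n = 1)
    (hab : Commute a b) (hac : Commute a c) (hbc : Commute b c) :
    (zmodPowHom₃ ha hb hc hab hac hbc).range = Subgroup.closure {a, b, c} := by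
  refine (MonoidHom.noncommCoprod_range _ _ _).trans ?_
  rw [MonoidHom.noncommCoprod_range]
  simp only [range_zmodPowHom, Subgroup.zpowers_eq_closure, Set.insert_eq, Subgroup.closure_union]

end ZModPowHom₃

def σP : Equiv.Perm (Fin 4 → ℤ) := srP * sgP * sbP

lemma cP_apply (v : Fin 4 → ℤ) : cP v = ![v 0, v 3, v 1, v 2] := rfl

lemma σP_apply (v : Fin 4 → ℤ) : σP v = ![v 0, -v 1, -v 2, -v 3] := by
  ext i; fin_cases i <;> rfl

lemma crP_apply (v : Fin 4 → ℤ) : crP v = -v := rfl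

lemma τP_apply (v : Fin 4 → ℤ) : τP v = ![-v 0, v 1, v 2, v 3] := by
  ext i; fin_cases i <;> simp [τP, srP, sgP, sbP, crP]

lemma cP_pow_three : cP ^ 3 = 1 := by
  ext v i; fin_cases i <;> rfl

lemma σP_sq : σP ^ 2 = 1 := by
  ext v i; fin_cases i <;> simp [sq, σP_apply]

lemma crP_sq : crP ^ 2 = 1 := by
  ext v i; simp [sq, crP_apply]

lemma τP_sq : τP ^ 2 = 1 := by
  ext v i; fin_cases i <;> simp [sq, τP_apply]

lemma commute_cP_σP : Commute cP σP := by
  refine Equiv.ext fun v => ?_; ext i; fin_cases i <;> simp [cP_apply, σP_apply]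

lemma commute_cP_crP : Commute cP crP := by
  refine Equiv.ext fun v => ?_; ext i; fin_cases i <;> simp [cP_apply, crP_apply]

lemma commute_σP_crP : Commute σP crP := by
  refine Equiv.ext fun v => ?_; ext i; fin_cases i <;> simp [σP_apply, crP_apply]

abbrev Γ4aParams := Multiplicative (ZMod 3) × Multiplicative (ZMod 2) × Multiplicative (ZMod 2)

def Γ4aParam : Γ4aParams →* Equiv.Perm (Fin 4 → ℤ) :=
  zmodPowHom₃ cP_pow_three σP_sq crP_sq commute_cP_σP commute_cP_crP commute_σP_crP

lemma range_Γ4aParam : Γ4aParam.range = Γ4alin :=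
  range_zmodPowHom₃ _ _ _ _ _ _

def τParam : Γ4aParams := (1, .ofAdd 1, .ofAdd 1)

lemma Γ4aParam_τParam : Γ4aParam τParam = τP := by
  simp [Γ4aParam, zmodPowHom₃, τParam, τP, σP, mul_assoc]

lemma eq_one_or_eq_τParam_of_Γ4aParam_fixes (x : Γ4aParams)
    (hx : Γ4aParam x ![0, 1, -1, 0] = ![0, 1, -1, 0]) : x = 1 ∨ x = τParam := by
  revert x; decide

lemma τP_ne_one : τP ≠ 1 := fun h => by
  simpa [τP_apply] using congrFun (Equiv.ext_iff.mp h ![1, 0, 0, 0]) 0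

lemma orderOf_τP : orderOf τP = 2 :=
  orderOf_eq_prime τP_sq τP_ne_one

lemma τP_apply_of_mem_N4a {v : Fin 4 → ℤ} (hv : v ∈ N4a) : τP v = v := by
  ext i; fin_cases i <;> simp [τP_apply, hv.1]

lemma injective_Γ4aParam : Function.Injective Γ4aParam := by
  refine (injective_iff_map_eq_one Γ4aParam).mpr fun x hx => ?_
  rcases eq_one_or_eq_τParam_of_Γ4aParam_fixes x (by rw [hx]; rfl) with rfl | rfl
  · rfl
  · exact absurd (Γ4aParam_τParam ▸ hx) τP_ne_one

lemma card_Γ4alin : Nat.card Γ4alin = 12 := by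
  rw [← range_Γ4aParam, ← Nat.card_congr (MonoidHom.ofInjective injective_Γ4aParam).toEquiv]
  simp [Nat.card_eq_fintype_card]

lemma Γ4alin_inf_iInf_stabilizer_N4a :
    Γ4alin ⊓ (⨅ v ∈ N4a, MulAction.stabilizer (Equiv.Perm (Fin 4 → ℤ)) v) =
      Subgroup.zpowers τP := by
  refine le_antisymm ?_ ?_
  · intro g hg
    obtain ⟨hg, hfix⟩ := Subgroup.mem_inf.mp hg
    simp only [Subgroup.mem_iInf, MulAction.mem_stabilizer_iff, Equiv.Perm.smul_def] at hfix
    obtain ⟨x, rfl⟩ := range_Γ4aParam ▸ hg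
    rcases eq_one_or_eq_τParam_of_Γ4aParam_fixes x (hfix _ ⟨rfl, by decide⟩) with rfl | rfl
    · exact map_one Γ4aParam ▸ one_mem _
    · exact Γ4aParam_τParam ▸ Subgroup.mem_zpowers τP
  · simp only [Subgroup.zpowers_le, Subgroup.mem_inf, Subgroup.mem_iInf,
      MulAction.mem_stabilizer_iff, Equiv.Perm.smul_def]
    exact ⟨range_Γ4aParam ▸ Γ4aParam_τParam ▸ MonoidHom.mem_range.mpr ⟨_, rfl⟩,
      fun _ => τP_apply_of_mem_N4a⟩

/-- `τ = s_r∘s_g∘s_b∘Cr` acts as the identity on `N₄ₐ`, and the kernel of the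
action of `Γ₄ₐ = ⟨c, s_r∘s_g∘s_b, Cr⟩` on `N₄ₐ` is exactly the order-2 subgroup
`{id, τ}`; the quotient, of order `12 / 2 = 6` and isomorphic to `C₃ × S₂`,
acts faithfully on `N₄ₐ`. -/
theorem Gamma4a_kernel_on_N4a :
    (∀ v ∈ N4a, τP v = v) ∧
    Γ4alin ⊓ (⨅ v ∈ N4a, MulAction.stabilizer (Equiv.Perm (Fin 4 → ℤ)) v) =
      Subgroup.zpowers τP ∧
    Nat.card (Subgroup.zpowers τP : Subgroup (Equiv.Perm (Fin 4 → ℤ))) = 2 ∧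
    Nat.card Γ4alin = 12 :=
  ⟨fun _ => τP_apply_of_mem_N4a, Γ4alin_inf_iInf_stabilizer_N4a,
    (Nat.card_zpowers τP).trans orderOf_τP, card_Γ4alin⟩
end

section
/- Let Γ̃₄ₐ ⊆ Sym(L) be the subgroup generated by c, s_r∘s_g∘s_b, Cr and the involution σ = (R₀R₁)(R₃R₂)(G₀B₁)(G₃B₂)(B₀G₁)(B₃G₂). Then Γ̃₄ₐ has order 24, and its center is exactly the two-element subgroup {id, τ} where τ = s_r∘s_g∘s_b∘Cr = (R₀R₃)(G₀G₃)(B₀B₃)(R₁R₂)(G₁G₂)(B₁B₂). -/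
/-- `σ = (R₀R₁)(R₃R₂)(G₀B₁)(G₃B₂)(B₀G₁)(B₃G₂)`. -/
def σL : Equiv.Perm (Fin 12) :=
  Equiv.swap 0 1 * Equiv.swap 3 2 * Equiv.swap 4 9 *
    Equiv.swap 7 10 * Equiv.swap 8 5 * Equiv.swap 11 6

/-- `τ = s_r∘s_g∘s_b∘Cr`. -/
def τL : Equiv.Perm (Fin 12) := srL * sgL * sbL * crL

/-- The full relabeling group `Γ̃₄ₐ = ⟨c, s_r∘s_g∘s_b, Cr, σ⟩` of degree-4
non-nodal Burniat configurations. -/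
def Γt4a : Subgroup (Equiv.Perm (Fin 12)) :=
  Subgroup.closure {cL, srL * sgL * sbL, crL, σL}

/-! ### Auxiliary material -/

def gssb : Equiv.Perm (Fin 12) := srL * sgL * sbL

def e0 : Equiv.Perm (Fin 12) := ⟨![0, 1, 2, 3, 4, 5, 6, 7, 8, 9, 10, 11], ![0, 1, 2, 3, 4, 5, 6, 7, 8, 9, 10, 11], by decide, by decide⟩
def e1 : Equiv.Perm (Fin 12) := ⟨![4, 5, 6, 7, 8, 9, 10, 11, 0, 1, 2, 3], ![8, 9, 10, 11, 0, 1, 2, 3, 4, 5, 6, 7], by decide, by decide⟩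
def e2 : Equiv.Perm (Fin 12) := ⟨![0, 2, 1, 3, 4, 6, 5, 7, 8, 10, 9, 11], ![0, 2, 1, 3, 4, 6, 5, 7, 8, 10, 9, 11], by decide, by decide⟩
def e3 : Equiv.Perm (Fin 12) := ⟨![3, 1, 2, 0, 7, 5, 6, 4, 11, 9, 10, 8], ![3, 1, 2, 0, 7, 5, 6, 4, 11, 9, 10, 8], by decide, by decide⟩
def e4 : Equiv.Perm (Fin 12) := ⟨![1, 0, 3, 2, 9, 8, 11, 10, 5, 4, 7, 6], ![1, 0, 3, 2, 9, 8, 11, 10, 5, 4, 7, 6], by decide, by decide⟩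
def e5 : Equiv.Perm (Fin 12) := ⟨![8, 9, 10, 11, 0, 1, 2, 3, 4, 5, 6, 7], ![4, 5, 6, 7, 8, 9, 10, 11, 0, 1, 2, 3], by decide, by decide⟩
def e6 : Equiv.Perm (Fin 12) := ⟨![4, 6, 5, 7, 8, 10, 9, 11, 0, 2, 1, 3], ![8, 10, 9, 11, 0, 2, 1, 3, 4, 6, 5, 7], by decide, by decide⟩
def e7 : Equiv.Perm (Fin 12) := ⟨![7, 5, 6, 4, 11, 9, 10, 8, 3, 1, 2, 0], ![11, 9, 10, 8, 3, 1, 2, 0, 7, 5, 6, 4], by decide, by decide⟩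
def e8 : Equiv.Perm (Fin 12) := ⟨![5, 4, 7, 6, 1, 0, 3, 2, 9, 8, 11, 10], ![5, 4, 7, 6, 1, 0, 3, 2, 9, 8, 11, 10], by decide, by decide⟩
def e9 : Equiv.Perm (Fin 12) := ⟨![3, 2, 1, 0, 7, 6, 5, 4, 11, 10, 9, 8], ![3, 2, 1, 0, 7, 6, 5, 4, 11, 10, 9, 8], by decide, by decide⟩
def e10 : Equiv.Perm (Fin 12) := ⟨![2, 0, 3, 1, 10, 8, 11, 9, 6, 4, 7, 5], ![1, 3, 0, 2, 9, 11, 8, 10, 5, 7, 4, 6], by decide, by decide⟩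
def e11 : Equiv.Perm (Fin 12) := ⟨![1, 3, 0, 2, 9, 11, 8, 10, 5, 7, 4, 6], ![2, 0, 3, 1, 10, 8, 11, 9, 6, 4, 7, 5], by decide, by decide⟩
def e12 : Equiv.Perm (Fin 12) := ⟨![9, 8, 11, 10, 5, 4, 7, 6, 1, 0, 3, 2], ![9, 8, 11, 10, 5, 4, 7, 6, 1, 0, 3, 2], by decide, by decide⟩
def e13 : Equiv.Perm (Fin 12) := ⟨![8, 10, 9, 11, 0, 2, 1, 3, 4, 6, 5, 7], ![4, 6, 5, 7, 8, 10, 9, 11, 0, 2, 1, 3], by decide, by decide⟩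
def e14 : Equiv.Perm (Fin 12) := ⟨![11, 9, 10, 8, 3, 1, 2, 0, 7, 5, 6, 4], ![7, 5, 6, 4, 11, 9, 10, 8, 3, 1, 2, 0], by decide, by decide⟩
def e15 : Equiv.Perm (Fin 12) := ⟨![7, 6, 5, 4, 11, 10, 9, 8, 3, 2, 1, 0], ![11, 10, 9, 8, 3, 2, 1, 0, 7, 6, 5, 4], by decide, by decide⟩
def e16 : Equiv.Perm (Fin 12) := ⟨![6, 4, 7, 5, 2, 0, 3, 1, 10, 8, 11, 9], ![5, 7, 4, 6, 1, 3, 0, 2, 9, 11, 8, 10], by decide, by decide⟩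
def e17 : Equiv.Perm (Fin 12) := ⟨![5, 7, 4, 6, 1, 3, 0, 2, 9, 11, 8, 10], ![6, 4, 7, 5, 2, 0, 3, 1, 10, 8, 11, 9], by decide, by decide⟩
def e18 : Equiv.Perm (Fin 12) := ⟨![2, 3, 0, 1, 10, 11, 8, 9, 6, 7, 4, 5], ![2, 3, 0, 1, 10, 11, 8, 9, 6, 7, 4, 5], by decide, by decide⟩
def e19 : Equiv.Perm (Fin 12) := ⟨![10, 8, 11, 9, 6, 4, 7, 5, 2, 0, 3, 1], ![9, 11, 8, 10, 5, 7, 4, 6, 1, 3, 0, 2], by decide, by decide⟩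
def e20 : Equiv.Perm (Fin 12) := ⟨![9, 11, 8, 10, 5, 7, 4, 6, 1, 3, 0, 2], ![10, 8, 11, 9, 6, 4, 7, 5, 2, 0, 3, 1], by decide, by decide⟩
def e21 : Equiv.Perm (Fin 12) := ⟨![11, 10, 9, 8, 3, 2, 1, 0, 7, 6, 5, 4], ![7, 6, 5, 4, 11, 10, 9, 8, 3, 2, 1, 0], by decide, by decide⟩
def e22 : Equiv.Perm (Fin 12) := ⟨![6, 7, 4, 5, 2, 3, 0, 1, 10, 11, 8, 9], ![6, 7, 4, 5, 2, 3, 0, 1, 10, 11, 8, 9], by decide, by decide⟩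
def e23 : Equiv.Perm (Fin 12) := ⟨![10, 11, 8, 9, 6, 7, 4, 5, 2, 3, 0, 1], ![10, 11, 8, 9, 6, 7, 4, 5, 2, 3, 0, 1], by decide, by decide⟩

def elemsL : List (Equiv.Perm (Fin 12)) := [e0, e1, e2, e3, e4, e5, e6, e7, e8, e9, e10, e11, e12, e13, e14, e15, e16, e17, e18, e19, e20, e21, e22, e23]

lemma he0 : e0 = 1 := by decide
lemma he1 : e1 = cL := by decide
lemma he2 : e2 = gssb := by decide
lemma he3 : e3 = crL := by decide
lemma he4 : e4 = σL := by decide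
lemma he5 : e5 = cL*cL := by decide
lemma he6 : e6 = cL*gssb := by decide
lemma he7 : e7 = cL*crL := by decide
lemma he8 : e8 = cL*σL := by decide
lemma he9 : e9 = gssb*crL := by decide
lemma he10 : e10 = gssb*σL := by decide
lemma he11 : e11 = crL*σL := by decide
lemma he12 : e12 = σL*cL := by decide
lemma he13 : e13 = cL*cL*gssb := by decide
lemma he14 : e14 = cL*cL*crL := by decide
lemma he15 : e15 = cL*gssb*crL := by decide
lemma he16 : e16 = cL*gssb*σL := by decide
lemma he17 : e17 = cL*crL*σL := by decide
lemma he18 : e18 = gssb*crL*σL := by decide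
lemma he19 : e19 = gssb*σL*cL := by decide
lemma he20 : e20 = crL*σL*cL := by decide
lemma he21 : e21 = cL*cL*gssb*crL := by decide
lemma he22 : e22 = cL*gssb*crL*σL := by decide
lemma he23 : e23 = gssb*crL*σL*cL := by decide

lemma hinv1 : cL⁻¹ = e5 := by decide
lemma hinv2 : gssb⁻¹ = e2 := by decide
lemma hinv3 : crL⁻¹ = e3 := by decide
lemma hinv4 : σL⁻¹ = e4 := by decide
lemma mem0 : e0 ∈ elemsL := by simp [elemsL]
lemma mem1 : e1 ∈ elemsL := by simp [elemsL]
lemma mem2 : e2 ∈ elemsL := by simp [elemsL]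
lemma mem3 : e3 ∈ elemsL := by simp [elemsL]
lemma mem4 : e4 ∈ elemsL := by simp [elemsL]
lemma mem5 : e5 ∈ elemsL := by simp [elemsL]
lemma mem6 : e6 ∈ elemsL := by simp [elemsL]
lemma mem7 : e7 ∈ elemsL := by simp [elemsL]
lemma mem8 : e8 ∈ elemsL := by simp [elemsL]
lemma mem9 : e9 ∈ elemsL := by simp [elemsL]
lemma mem10 : e10 ∈ elemsL := by simp [elemsL]
lemma mem11 : e11 ∈ elemsL := by simp [elemsL]
lemma mem12 : e12 ∈ elemsL := by simp [elemsL]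
lemma mem13 : e13 ∈ elemsL := by simp [elemsL]
lemma mem14 : e14 ∈ elemsL := by simp [elemsL]
lemma mem15 : e15 ∈ elemsL := by simp [elemsL]
lemma mem16 : e16 ∈ elemsL := by simp [elemsL]
lemma mem17 : e17 ∈ elemsL := by simp [elemsL]
lemma mem18 : e18 ∈ elemsL := by simp [elemsL]
lemma mem19 : e19 ∈ elemsL := by simp [elemsL]
lemma mem20 : e20 ∈ elemsL := by simp [elemsL]
lemma mem21 : e21 ∈ elemsL := by simp [elemsL]
lemma mem22 : e22 ∈ elemsL := by simp [elemsL]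
lemma mem23 : e23 ∈ elemsL := by simp [elemsL]
lemma mul_e1 : ∀ a ∈ elemsL, a * e1 ∈ elemsL := by
  intro a ha
  simp only [elemsL, List.mem_cons, List.not_mem_nil, or_false] at ha
  obtain rfl|rfl|rfl|rfl|rfl|rfl|rfl|rfl|rfl|rfl|rfl|rfl|rfl|rfl|rfl|rfl|rfl|rfl|rfl|rfl|rfl|rfl|rfl|rfl := ha
  · exact (show e0 * e1 = e1 by decide).symm ▸ mem1
  · exact (show e1 * e1 = e5 by decide).symm ▸ mem5
  · exact (show e2 * e1 = e6 by decide).symm ▸ mem6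
  · exact (show e3 * e1 = e7 by decide).symm ▸ mem7
  · exact (show e4 * e1 = e12 by decide).symm ▸ mem12
  · exact (show e5 * e1 = e0 by decide).symm ▸ mem0
  · exact (show e6 * e1 = e13 by decide).symm ▸ mem13
  · exact (show e7 * e1 = e14 by decide).symm ▸ mem14
  · exact (show e8 * e1 = e4 by decide).symm ▸ mem4
  · exact (show e9 * e1 = e15 by decide).symm ▸ mem15
  · exact (show e10 * e1 = e19 by decide).symm ▸ mem19
  · exact (show e11 * e1 = e20 by decide).symm ▸ mem20
  · exact (show e12 * e1 = e8 by decide).symm ▸ mem8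
  · exact (show e13 * e1 = e2 by decide).symm ▸ mem2
  · exact (show e14 * e1 = e3 by decide).symm ▸ mem3
  · exact (show e15 * e1 = e21 by decide).symm ▸ mem21
  · exact (show e16 * e1 = e10 by decide).symm ▸ mem10
  · exact (show e17 * e1 = e11 by decide).symm ▸ mem11
  · exact (show e18 * e1 = e23 by decide).symm ▸ mem23
  · exact (show e19 * e1 = e16 by decide).symm ▸ mem16
  · exact (show e20 * e1 = e17 by decide).symm ▸ mem17
  · exact (show e21 * e1 = e9 by decide).symm ▸ mem9
  · exact (show e22 * e1 = e18 by decide).symm ▸ mem18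
  · exact (show e23 * e1 = e22 by decide).symm ▸ mem22
lemma mul_e2 : ∀ a ∈ elemsL, a * e2 ∈ elemsL := by
  intro a ha
  simp only [elemsL, List.mem_cons, List.not_mem_nil, or_false] at ha
  obtain rfl|rfl|rfl|rfl|rfl|rfl|rfl|rfl|rfl|rfl|rfl|rfl|rfl|rfl|rfl|rfl|rfl|rfl|rfl|rfl|rfl|rfl|rfl|rfl := ha
  · exact (show e0 * e2 = e2 by decide).symm ▸ mem2
  · exact (show e1 * e2 = e6 by decide).symm ▸ mem6
  · exact (show e2 * e2 = e0 by decide).symm ▸ mem0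
  · exact (show e3 * e2 = e9 by decide).symm ▸ mem9
  · exact (show e4 * e2 = e11 by decide).symm ▸ mem11
  · exact (show e5 * e2 = e13 by decide).symm ▸ mem13
  · exact (show e6 * e2 = e1 by decide).symm ▸ mem1
  · exact (show e7 * e2 = e15 by decide).symm ▸ mem15
  · exact (show e8 * e2 = e17 by decide).symm ▸ mem17
  · exact (show e9 * e2 = e3 by decide).symm ▸ mem3
  · exact (show e10 * e2 = e18 by decide).symm ▸ mem18
  · exact (show e11 * e2 = e4 by decide).symm ▸ mem4
  · exact (show e12 * e2 = e20 by decide).symm ▸ mem20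
  · exact (show e13 * e2 = e5 by decide).symm ▸ mem5
  · exact (show e14 * e2 = e21 by decide).symm ▸ mem21
  · exact (show e15 * e2 = e7 by decide).symm ▸ mem7
  · exact (show e16 * e2 = e22 by decide).symm ▸ mem22
  · exact (show e17 * e2 = e8 by decide).symm ▸ mem8
  · exact (show e18 * e2 = e10 by decide).symm ▸ mem10
  · exact (show e19 * e2 = e23 by decide).symm ▸ mem23
  · exact (show e20 * e2 = e12 by decide).symm ▸ mem12
  · exact (show e21 * e2 = e14 by decide).symm ▸ mem14
  · exact (show e22 * e2 = e16 by decide).symm ▸ mem16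
  · exact (show e23 * e2 = e19 by decide).symm ▸ mem19
lemma mul_e3 : ∀ a ∈ elemsL, a * e3 ∈ elemsL := by
  intro a ha
  simp only [elemsL, List.mem_cons, List.not_mem_nil, or_false] at ha
  obtain rfl|rfl|rfl|rfl|rfl|rfl|rfl|rfl|rfl|rfl|rfl|rfl|rfl|rfl|rfl|rfl|rfl|rfl|rfl|rfl|rfl|rfl|rfl|rfl := ha
  · exact (show e0 * e3 = e3 by decide).symm ▸ mem3
  · exact (show e1 * e3 = e7 by decide).symm ▸ mem7
  · exact (show e2 * e3 = e9 by decide).symm ▸ mem9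
  · exact (show e3 * e3 = e0 by decide).symm ▸ mem0
  · exact (show e4 * e3 = e10 by decide).symm ▸ mem10
  · exact (show e5 * e3 = e14 by decide).symm ▸ mem14
  · exact (show e6 * e3 = e15 by decide).symm ▸ mem15
  · exact (show e7 * e3 = e1 by decide).symm ▸ mem1
  · exact (show e8 * e3 = e16 by decide).symm ▸ mem16
  · exact (show e9 * e3 = e2 by decide).symm ▸ mem2
  · exact (show e10 * e3 = e4 by decide).symm ▸ mem4
  · exact (show e11 * e3 = e18 by decide).symm ▸ mem18
  · exact (show e12 * e3 = e19 by decide).symm ▸ mem19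
  · exact (show e13 * e3 = e21 by decide).symm ▸ mem21
  · exact (show e14 * e3 = e5 by decide).symm ▸ mem5
  · exact (show e15 * e3 = e6 by decide).symm ▸ mem6
  · exact (show e16 * e3 = e8 by decide).symm ▸ mem8
  · exact (show e17 * e3 = e22 by decide).symm ▸ mem22
  · exact (show e18 * e3 = e11 by decide).symm ▸ mem11
  · exact (show e19 * e3 = e12 by decide).symm ▸ mem12
  · exact (show e20 * e3 = e23 by decide).symm ▸ mem23
  · exact (show e21 * e3 = e13 by decide).symm ▸ mem13
  · exact (show e22 * e3 = e17 by decide).symm ▸ mem17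
  · exact (show e23 * e3 = e20 by decide).symm ▸ mem20
lemma mul_e4 : ∀ a ∈ elemsL, a * e4 ∈ elemsL := by
  intro a ha
  simp only [elemsL, List.mem_cons, List.not_mem_nil, or_false] at ha
  obtain rfl|rfl|rfl|rfl|rfl|rfl|rfl|rfl|rfl|rfl|rfl|rfl|rfl|rfl|rfl|rfl|rfl|rfl|rfl|rfl|rfl|rfl|rfl|rfl := ha
  · exact (show e0 * e4 = e4 by decide).symm ▸ mem4
  · exact (show e1 * e4 = e8 by decide).symm ▸ mem8
  · exact (show e2 * e4 = e10 by decide).symm ▸ mem10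
  · exact (show e3 * e4 = e11 by decide).symm ▸ mem11
  · exact (show e4 * e4 = e0 by decide).symm ▸ mem0
  · exact (show e5 * e4 = e12 by decide).symm ▸ mem12
  · exact (show e6 * e4 = e16 by decide).symm ▸ mem16
  · exact (show e7 * e4 = e17 by decide).symm ▸ mem17
  · exact (show e8 * e4 = e1 by decide).symm ▸ mem1
  · exact (show e9 * e4 = e18 by decide).symm ▸ mem18
  · exact (show e10 * e4 = e2 by decide).symm ▸ mem2
  · exact (show e11 * e4 = e3 by decide).symm ▸ mem3
  · exact (show e12 * e4 = e5 by decide).symm ▸ mem5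
  · exact (show e13 * e4 = e19 by decide).symm ▸ mem19
  · exact (show e14 * e4 = e20 by decide).symm ▸ mem20
  · exact (show e15 * e4 = e22 by decide).symm ▸ mem22
  · exact (show e16 * e4 = e6 by decide).symm ▸ mem6
  · exact (show e17 * e4 = e7 by decide).symm ▸ mem7
  · exact (show e18 * e4 = e9 by decide).symm ▸ mem9
  · exact (show e19 * e4 = e13 by decide).symm ▸ mem13
  · exact (show e20 * e4 = e14 by decide).symm ▸ mem14
  · exact (show e21 * e4 = e23 by decide).symm ▸ mem23
  · exact (show e22 * e4 = e15 by decide).symm ▸ mem15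
  · exact (show e23 * e4 = e21 by decide).symm ▸ mem21
lemma mul_e5 : ∀ a ∈ elemsL, a * e5 ∈ elemsL := by
  intro a ha
  simp only [elemsL, List.mem_cons, List.not_mem_nil, or_false] at ha
  obtain rfl|rfl|rfl|rfl|rfl|rfl|rfl|rfl|rfl|rfl|rfl|rfl|rfl|rfl|rfl|rfl|rfl|rfl|rfl|rfl|rfl|rfl|rfl|rfl := ha
  · exact (show e0 * e5 = e5 by decide).symm ▸ mem5
  · exact (show e1 * e5 = e0 by decide).symm ▸ mem0
  · exact (show e2 * e5 = e13 by decide).symm ▸ mem13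
  · exact (show e3 * e5 = e14 by decide).symm ▸ mem14
  · exact (show e4 * e5 = e8 by decide).symm ▸ mem8
  · exact (show e5 * e5 = e1 by decide).symm ▸ mem1
  · exact (show e6 * e5 = e2 by decide).symm ▸ mem2
  · exact (show e7 * e5 = e3 by decide).symm ▸ mem3
  · exact (show e8 * e5 = e12 by decide).symm ▸ mem12
  · exact (show e9 * e5 = e21 by decide).symm ▸ mem21
  · exact (show e10 * e5 = e16 by decide).symm ▸ mem16
  · exact (show e11 * e5 = e17 by decide).symm ▸ mem17
  · exact (show e12 * e5 = e4 by decide).symm ▸ mem4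
  · exact (show e13 * e5 = e6 by decide).symm ▸ mem6
  · exact (show e14 * e5 = e7 by decide).symm ▸ mem7
  · exact (show e15 * e5 = e9 by decide).symm ▸ mem9
  · exact (show e16 * e5 = e19 by decide).symm ▸ mem19
  · exact (show e17 * e5 = e20 by decide).symm ▸ mem20
  · exact (show e18 * e5 = e22 by decide).symm ▸ mem22
  · exact (show e19 * e5 = e10 by decide).symm ▸ mem10
  · exact (show e20 * e5 = e11 by decide).symm ▸ mem11
  · exact (show e21 * e5 = e15 by decide).symm ▸ mem15
  · exact (show e22 * e5 = e23 by decide).symm ▸ mem23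
  · exact (show e23 * e5 = e18 by decide).symm ▸ mem18
lemma center_elems : ∀ g ∈ elemsL, ((∀ h ∈ elemsL, g * h = h * g) ↔ (g = e0 ∨ g = e9)) := by
  intro g hg
  simp only [elemsL, List.mem_cons, List.not_mem_nil, or_false] at hg
  obtain rfl|rfl|rfl|rfl|rfl|rfl|rfl|rfl|rfl|rfl|rfl|rfl|rfl|rfl|rfl|rfl|rfl|rfl|rfl|rfl|rfl|rfl|rfl|rfl := hg
  · exact ⟨fun _ => Or.inl rfl, fun _ h _ => by rw [he0, one_mul, mul_one]⟩
  · exact ⟨fun hc => absurd (hc e4 mem4) (by decide), fun h => by rcases h with h|h <;> exact absurd h (by decide)⟩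
  · exact ⟨fun hc => absurd (hc e4 mem4) (by decide), fun h => by rcases h with h|h <;> exact absurd h (by decide)⟩
  · exact ⟨fun hc => absurd (hc e4 mem4) (by decide), fun h => by rcases h with h|h <;> exact absurd h (by decide)⟩
  · exact ⟨fun hc => absurd (hc e1 mem1) (by decide), fun h => by rcases h with h|h <;> exact absurd h (by decide)⟩
  · exact ⟨fun hc => absurd (hc e4 mem4) (by decide), fun h => by rcases h with h|h <;> exact absurd h (by decide)⟩
  · exact ⟨fun hc => absurd (hc e4 mem4) (by decide), fun h => by rcases h with h|h <;> exact absurd h (by decide)⟩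
  · exact ⟨fun hc => absurd (hc e4 mem4) (by decide), fun h => by rcases h with h|h <;> exact absurd h (by decide)⟩
  · exact ⟨fun hc => absurd (hc e1 mem1) (by decide), fun h => by rcases h with h|h <;> exact absurd h (by decide)⟩
  · refine ⟨fun _ => Or.inr rfl, fun _ h hh => ?_⟩
    simp only [elemsL, List.mem_cons, List.not_mem_nil, or_false] at hh
    obtain rfl|rfl|rfl|rfl|rfl|rfl|rfl|rfl|rfl|rfl|rfl|rfl|rfl|rfl|rfl|rfl|rfl|rfl|rfl|rfl|rfl|rfl|rfl|rfl := hh <;> decide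
  · exact ⟨fun hc => absurd (hc e1 mem1) (by decide), fun h => by rcases h with h|h <;> exact absurd h (by decide)⟩
  · exact ⟨fun hc => absurd (hc e1 mem1) (by decide), fun h => by rcases h with h|h <;> exact absurd h (by decide)⟩
  · exact ⟨fun hc => absurd (hc e1 mem1) (by decide), fun h => by rcases h with h|h <;> exact absurd h (by decide)⟩
  · exact ⟨fun hc => absurd (hc e4 mem4) (by decide), fun h => by rcases h with h|h <;> exact absurd h (by decide)⟩
  · exact ⟨fun hc => absurd (hc e4 mem4) (by decide), fun h => by rcases h with h|h <;> exact absurd h (by decide)⟩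
  · exact ⟨fun hc => absurd (hc e4 mem4) (by decide), fun h => by rcases h with h|h <;> exact absurd h (by decide)⟩
  · exact ⟨fun hc => absurd (hc e1 mem1) (by decide), fun h => by rcases h with h|h <;> exact absurd h (by decide)⟩
  · exact ⟨fun hc => absurd (hc e1 mem1) (by decide), fun h => by rcases h with h|h <;> exact absurd h (by decide)⟩
  · exact ⟨fun hc => absurd (hc e1 mem1) (by decide), fun h => by rcases h with h|h <;> exact absurd h (by decide)⟩
  · exact ⟨fun hc => absurd (hc e1 mem1) (by decide), fun h => by rcases h with h|h <;> exact absurd h (by decide)⟩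
  · exact ⟨fun hc => absurd (hc e1 mem1) (by decide), fun h => by rcases h with h|h <;> exact absurd h (by decide)⟩
  · exact ⟨fun hc => absurd (hc e4 mem4) (by decide), fun h => by rcases h with h|h <;> exact absurd h (by decide)⟩
  · exact ⟨fun hc => absurd (hc e1 mem1) (by decide), fun h => by rcases h with h|h <;> exact absurd h (by decide)⟩
  · exact ⟨fun hc => absurd (hc e1 mem1) (by decide), fun h => by rcases h with h|h <;> exact absurd h (by decide)⟩

lemma mem_elems_of_mem : ∀ g ∈ Γt4a, g ∈ elemsL := by
  intro g hg
  have hg' : g ∈ Submonoid.closure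
      (({cL, srL * sgL * sbL, crL, σL} : Set (Equiv.Perm (Fin 12))) ∪
        ({cL, srL * sgL * sbL, crL, σL} : Set (Equiv.Perm (Fin 12)))⁻¹) := by
    rw [← Subgroup.closure_toSubmonoid]; exact hg
  have key : ∀ a ∈ elemsL, a * g ∈ elemsL := by
    refine Submonoid.closure_induction
      (motive := fun x _ => ∀ a ∈ elemsL, a * x ∈ elemsL) ?_ ?_ ?_ hg'
    · intro x hx
      rcases hx with hx | hx
      · simp only [Set.mem_insert_iff, Set.mem_singleton_iff] at hx
        rcases hx with rfl | rfl | rfl | rfl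
        · exact fun a ha => he1 ▸ mul_e1 a ha
        · exact show ∀ a ∈ elemsL, a * gssb ∈ elemsL from
            fun a ha => he2 ▸ mul_e2 a ha
        · exact fun a ha => he3 ▸ mul_e3 a ha
        · exact fun a ha => he4 ▸ mul_e4 a ha
      · rw [Set.mem_inv] at hx
        simp only [Set.mem_insert_iff, Set.mem_singleton_iff] at hx
        rcases hx with h | h | h | h
        · have hx2 : x = cL⁻¹ := by rw [← h, inv_inv]
          intro a ha; rw [hx2, hinv1]; exact mul_e5 a ha
        · have hx2 : x = (srL * sgL * sbL)⁻¹ := by rw [← h, inv_inv]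
          intro a ha
          rw [hx2, show (srL * sgL * sbL)⁻¹ = e2 from hinv2]
          exact mul_e2 a ha
        · have hx2 : x = crL⁻¹ := by rw [← h, inv_inv]
          intro a ha; rw [hx2, hinv3]; exact mul_e3 a ha
        · have hx2 : x = σL⁻¹ := by rw [← h, inv_inv]
          intro a ha; rw [hx2, hinv4]; exact mul_e4 a ha
    · exact fun a ha => by rwa [mul_one]
    · intro x y hx hy px py a ha
      rw [← mul_assoc]; exact py _ (px a ha)
  have h0 := key e0 mem0
  rwa [he0, one_mul] at h0

lemma mem_gamma_of_mem : ∀ g ∈ elemsL, g ∈ Γt4a := by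
  have hc : cL ∈ Γt4a := Subgroup.subset_closure (by simp)
  have hgss : srL * sgL * sbL ∈ Γt4a := Subgroup.subset_closure (by simp)
  have hcr : crL ∈ Γt4a := Subgroup.subset_closure (by simp)
  have hσ : σL ∈ Γt4a := Subgroup.subset_closure (by simp)
  intro g hmem
  simp only [elemsL, List.mem_cons, List.not_mem_nil, or_false] at hmem
  obtain rfl|rfl|rfl|rfl|rfl|rfl|rfl|rfl|rfl|rfl|rfl|rfl|rfl|rfl|rfl|rfl|rfl|rfl|rfl|rfl|rfl|rfl|rfl|rfl := hmem
  · rw [he0]; exact one_mem _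
  · rw [he1]; exact hc
  · rw [he2]; exact hgss
  · rw [he3]; exact hcr
  · rw [he4]; exact hσ
  · rw [he5]; exact mul_mem hc hc
  · rw [he6]; exact mul_mem hc hgss
  · rw [he7]; exact mul_mem hc hcr
  · rw [he8]; exact mul_mem hc hσ
  · rw [he9]; exact mul_mem hgss hcr
  · rw [he10]; exact mul_mem hgss hσ
  · rw [he11]; exact mul_mem hcr hσ
  · rw [he12]; exact mul_mem hσ hc
  · rw [he13]; exact mul_mem (mul_mem hc hc) hgss
  · rw [he14]; exact mul_mem (mul_mem hc hc) hcr
  · rw [he15]; exact mul_mem (mul_mem hc hgss) hcr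
  · rw [he16]; exact mul_mem (mul_mem hc hgss) hσ
  · rw [he17]; exact mul_mem (mul_mem hc hcr) hσ
  · rw [he18]; exact mul_mem (mul_mem hgss hcr) hσ
  · rw [he19]; exact mul_mem (mul_mem hgss hσ) hc
  · rw [he20]; exact mul_mem (mul_mem hcr hσ) hc
  · rw [he21]; exact mul_mem (mul_mem (mul_mem hc hc) hgss) hcr
  · rw [he22]; exact mul_mem (mul_mem (mul_mem hc hgss) hcr) hσ
  · rw [he23]; exact mul_mem (mul_mem (mul_mem hgss hcr) hσ) hc

lemma mem_iff' (g : Equiv.Perm (Fin 12)) : g ∈ Γt4a ↔ g ∈ elemsL :=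
  ⟨mem_elems_of_mem g, mem_gamma_of_mem g⟩

/-- `Γ̃₄ₐ` has order 24, and its center is exactly `{id, τ}` with
`τ = s_r∘s_g∘s_b∘Cr = (R₀R₃)(G₀G₃)(B₀B₃)(R₁R₂)(G₁G₂)(B₁B₂)`. -/
theorem Gammatilde4a_order_and_center :
    Nat.card Γt4a = 24 ∧
    τL = Equiv.swap 0 3 * Equiv.swap 4 7 * Equiv.swap 8 11 *
      Equiv.swap 1 2 * Equiv.swap 5 6 * Equiv.swap 9 10 ∧
    (∀ g ∈ Γt4a, (∀ h ∈ Γt4a, g * h = h * g) ↔ (g = 1 ∨ g = τL)) := by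
  refine ⟨?_, by decide, ?_⟩
  · have hset : (Γt4a : Set (Equiv.Perm (Fin 12))) =
        (elemsL.toFinset : Set (Equiv.Perm (Fin 12))) := by
      ext x; simp [mem_iff']
    have h1 : Nat.card Γt4a =
        Nat.card (elemsL.toFinset : Set (Equiv.Perm (Fin 12))) :=
      Nat.card_congr (Equiv.setCongr hset)
    rw [h1, Nat.card_coe_set_eq, Set.ncard_coe_finset]
    decide
  · intro g hg
    have h0 := center_elems g (mem_elems_of_mem g hg)
    constructor
    · intro hcomm
      have hall : ∀ h ∈ elemsL, g * h = h * g :=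
        fun h hh => hcomm h (mem_gamma_of_mem h hh)
      rcases h0.mp hall with h | h
      · exact Or.inl (h.trans he0)
      · exact Or.inr (h.trans he9.symm.symm)
    · intro hor h hh
      refine h0.mpr ?_ h (mem_elems_of_mem h hh)
      rcases hor with rfl | rfl
      · exact Or.inl he0.symm
      · exact Or.inr he9.symm
end
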